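/- arXiv:0807.3104 — 8 statements merged into one kernel-verified Lean document; each statement's English description precedes it below -/
import Mathlib

section
/- Let A ⊆ ℝⁿ be a convex compact set and Λ ⊆ ℝⁿ a linear subspace of dimension n−1. Then the set-valued mapping F(z) = (z + Λ) ∩ A is continuous in the Hausdorff metric on its domain {z : (z+Λ) ∩ A ≠ ∅} = A + Λ. -/
open Metric Set Pointwise
open scoped RealInnerProductSpace

/-- Segment interpolation: in a convex set, from a point at level `f x` we can move
toward a point at a higher level to reach any intermediate level, with controlled distance. -/
lemma seg_aux {n : ℕ} {A : Set (EuclideanSpace ℝ (Fin n))} (hA : Convex ℝ A)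
    (u x q : EuclideanSpace ℝ (Fin n)) (hx : x ∈ A) (hq : q ∈ A) (t : ℝ)
    (h1 : ⟪u, x⟫ ≤ t) (h2 : t ≤ ⟪u, q⟫) (hlt : ⟪u, x⟫ < ⟪u, q⟫) :
    ∃ y ∈ A, ⟪u, y⟫ = t ∧
      dist y x ≤ (t - ⟪u, x⟫) / (⟪u, q⟫ - ⟪u, x⟫) * dist q x := by
  set a : ℝ := ⟪u, x⟫
  set b : ℝ := ⟪u, q⟫
  have hba : (0:ℝ) < b - a := by linarith
  set s : ℝ := (t - a) / (b - a) with hs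
  have hs0 : 0 ≤ s := div_nonneg (by linarith) hba.le
  have hs1 : s ≤ 1 := by
    rw [hs, div_le_one hba]; linarith
  refine ⟨(1 - s) • x + s • q, hA hx hq (by linarith) hs0 (by ring), ?_, ?_⟩
  · rw [inner_add_right, real_inner_smul_right, real_inner_smul_right]
    have : s * (b - a) = t - a := div_mul_cancel₀ _ hba.ne'
    show (1 - s) * a + s * b = t
    nlinarith [this]
  · have : (1 - s) • x + s • q - x = s • (q - x) := by
      module
    rw [dist_eq_norm, this, norm_smul, Real.norm_eq_abs, abs_of_nonneg hs0, dist_eq_norm]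

/-- Upper semicontinuity: points of a compact set whose level is near `t₀` are near
the `t₀`-section. -/
lemma usc_aux {n : ℕ} {K : Set (EuclideanSpace ℝ (Fin n))} (hK : IsCompact K)
    (u : EuclideanSpace ℝ (Fin n)) (t₀ : ℝ) (ε : ℝ) (hε : 0 < ε) :
    ∃ δ > 0, ∀ x ∈ K, |⟪u, x⟫ - t₀| < δ →
      ∃ y ∈ {x ∈ K | ⟪u, x⟫ = t₀}, dist x y < ε := by
  set S₀ := {x ∈ K | ⟪u, x⟫ = t₀} with hS₀
  set T := thickening ε S₀ with hT
  have hf : Continuous fun x : EuclideanSpace ℝ (Fin n) => ⟪u, x⟫ :=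
    continuous_const.inner continuous_id
  set C := K \ T with hC
  have hCc : IsCompact C := hK.diff isOpen_thickening
  rcases C.eq_empty_or_nonempty with hCe | hCne
  · refine ⟨1, one_pos, fun x hx _ => ?_⟩
    have hxT : x ∈ T := by
      by_contra h
      have : x ∈ C := ⟨hx, h⟩
      rw [hCe] at this
      exact this
    exact mem_thickening_iff.1 hxT
  · have himc : IsCompact ((fun x => ⟪u, x⟫) '' C) := hCc.image hf
    have hclosed : IsClosed ((fun x => ⟪u, x⟫) '' C) := himc.isClosed
    have hne : ((fun x => ⟪u, x⟫) '' C).Nonempty := hCne.image _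
    have ht₀ : t₀ ∉ (fun x => ⟪u, x⟫) '' C := by
      rintro ⟨x, hxC, hxt⟩
      have hxS : x ∈ S₀ := ⟨hxC.1, hxt⟩
      exact hxC.2 (self_subset_thickening hε S₀ hxS)
    have hpos : 0 < infDist t₀ ((fun x => ⟪u, x⟫) '' C) :=
      (hclosed.notMem_iff_infDist_pos hne).1 ht₀
    refine ⟨_, hpos, fun x hx hlt => ?_⟩
    have hxT : x ∈ T := by
      by_contra h
      have hxC : x ∈ C := ⟨hx, h⟩
      have : infDist t₀ ((fun x => ⟪u, x⟫) '' C) ≤ dist t₀ ⟪u, x⟫ :=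
        infDist_le_dist_of_mem ⟨x, hxC, rfl⟩
      rw [dist_comm, Real.dist_eq] at this
      linarith [hlt, this]
    exact mem_thickening_iff.1 hxT

lemma normal_aux {n : ℕ} (hn : 1 ≤ n) (Λ : Submodule ℝ (EuclideanSpace ℝ (Fin n)))
    (hΛ : Module.finrank ℝ Λ = n - 1) :
    ∃ u : EuclideanSpace ℝ (Fin n), ‖u‖ = 1 ∧
      ∀ z x : EuclideanSpace ℝ (Fin n),
        (x ∈ (z + ·) '' (Λ : Set _) ↔ ⟪u, x⟫ = ⟪u, z⟫) := by
  have hfr : Module.finrank ℝ (EuclideanSpace ℝ (Fin n)) = n := finrank_euclideanSpace_fin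
  have hor : Module.finrank ℝ Λᗮ = 1 := by
    have h := Λ.finrank_add_finrank_orthogonal
    rw [hfr, hΛ] at h
    omega
  have hbot : Λᗮ ≠ ⊥ := by
    intro h
    rw [h, finrank_bot] at hor
    exact one_ne_zero hor.symm
  obtain ⟨u₀, hu₀Λ, hu₀⟩ := Submodule.exists_mem_ne_zero_of_ne_bot hbot
  have hspan : (ℝ ∙ u₀) = Λᗮ :=
    Submodule.eq_of_le_of_finrank_eq ((Submodule.span_singleton_le_iff_mem _ _).2 hu₀Λ)
      (by rw [finrank_span_singleton hu₀, hor])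
  have hΛeq : Λ = (ℝ ∙ u₀)ᗮ := by
    rw [hspan, Submodule.orthogonal_orthogonal]
  have hnorm : ‖u₀‖ ≠ 0 := norm_ne_zero_iff.2 hu₀
  refine ⟨(‖u₀‖⁻¹ : ℝ) • u₀, norm_smul_inv_norm hu₀, fun z x => ?_⟩
  have hmem : x ∈ (z + ·) '' (Λ : Set _) ↔ x - z ∈ Λ := by
    constructor
    · rintro ⟨w, hw, rfl⟩
      simpa using hw
    · intro h
      exact ⟨x - z, h, by module⟩
  rw [hmem, hΛeq, Submodule.mem_orthogonal_singleton_iff_inner_right]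
  rw [real_inner_smul_left, real_inner_smul_left]
  constructor
  · intro h
    have : ⟪u₀, x - z⟫ = 0 := h
    rw [inner_sub_right] at this
    have h2 : ⟪u₀, x⟫ = ⟪u₀, z⟫ := by linarith
    rw [h2]
  · intro h
    have h2 : ⟪u₀, x⟫ = ⟪u₀, z⟫ := mul_left_cancel₀ (inv_ne_zero hnorm) h
    show ⟪u₀, x - z⟫ = 0
    rw [inner_sub_right, h2, sub_self]

/-- For a convex compact `A ⊆ ℝⁿ` and a subspace `Λ` of dimension `n-1`,
the set-valued map `F z = (z + Λ) ∩ A` has domain `A + Λ` and is continuous in the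
Hausdorff metric on its domain. -/
theorem splitting_section_hyperplane (n : ℕ)
    (A : Set (EuclideanSpace ℝ (Fin n))) (hAconv : Convex ℝ A) (hAcomp : IsCompact A)
    (Λ : Submodule ℝ (EuclideanSpace ℝ (Fin n))) (hΛ : Module.finrank ℝ Λ = n - 1) :
    ({z : EuclideanSpace ℝ (Fin n) | (((z + ·) '' (Λ : Set _)) ∩ A).Nonempty}
        = A + (Λ : Set (EuclideanSpace ℝ (Fin n)))) ∧
    (∀ z₀ : EuclideanSpace ℝ (Fin n), (((z₀ + ·) '' (Λ : Set _)) ∩ A).Nonempty →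
      ∀ ε > 0, ∃ δ > 0, ∀ z : EuclideanSpace ℝ (Fin n),
        (((z + ·) '' (Λ : Set _)) ∩ A).Nonempty → dist z z₀ < δ →
          hausdorffDist (((z + ·) '' (Λ : Set _)) ∩ A)
            (((z₀ + ·) '' (Λ : Set _)) ∩ A) < ε) := by
  constructor
  · ext z
    simp only [Set.mem_setOf_eq]
    rw [Set.mem_add]
    constructor
    · rintro ⟨x, ⟨w, hw, hzw⟩, hxA⟩
      exact ⟨x, hxA, -w, Λ.neg_mem hw, by rw [← hzw]; module⟩
    · rintro ⟨a, ha, w, hw, hwz⟩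
      exact ⟨a, ⟨-w, Λ.neg_mem hw, by rw [← hwz]; module⟩, ha⟩
  · intro z₀ hz₀ ε hε
    rcases Nat.eq_zero_or_pos n with hn | hn
    · subst hn
      haveI : Subsingleton (EuclideanSpace ℝ (Fin 0)) :=
        Module.finrank_zero_iff.mp (finrank_euclideanSpace_fin : Module.finrank ℝ (EuclideanSpace ℝ (Fin 0)) = 0)
      refine ⟨1, one_pos, fun z hz _ => ?_⟩
      have huniv : ∀ s : Set (EuclideanSpace ℝ (Fin 0)), s.Nonempty → s = Set.univ := by
        rintro s ⟨x, hx⟩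
        exact Set.eq_univ_of_forall fun y => (Subsingleton.elim x y) ▸ hx
      rw [huniv _ hz, huniv _ hz₀, hausdorffDist_self_zero]
      exact hε
    · obtain ⟨u, hu1, hmem⟩ := normal_aux hn Λ hΛ
      have hAset : ∀ z : EuclideanSpace ℝ (Fin n),
          ((z + ·) '' (Λ : Set _)) ∩ A = {x ∈ A | ⟪u, x⟫ = ⟪u, z⟫} := by
        intro z
        ext x
        rw [Set.mem_inter_iff, hmem z x, Set.mem_sep_iff, and_comm]
      rw [hAset z₀] at hz₀
      obtain ⟨x₀, hx₀A, hx₀t⟩ := hz₀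
      have hAne : A.Nonempty := ⟨x₀, hx₀A⟩
      have hfc : Continuous fun x : EuclideanSpace ℝ (Fin n) => ⟪u, x⟫ :=
        continuous_const.inner continuous_id
      obtain ⟨p, hpA, hpmin⟩ := hAcomp.exists_isMinOn hAne hfc.continuousOn
      obtain ⟨q, hqA, hqmax⟩ := hAcomp.exists_isMaxOn hAne hfc.continuousOn
      set t₀ : ℝ := ⟪u, z₀⟫ with ht₀
      set m : ℝ := ⟪u, p⟫ with hm
      set M : ℝ := ⟪u, q⟫ with hM
      set D : ℝ := diam A with hD
      have hD0 : 0 ≤ D := diam_nonneg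
      have hbd := hAcomp.isBounded
      obtain ⟨δ₁, hδ₁, husc⟩ := usc_aux hAcomp u t₀ (ε/2) (half_pos hε)
      have key_up : ∃ δ₂ > 0, ∀ x ∈ A, ⟪u, x⟫ = t₀ → ∀ t : ℝ, t₀ < t → t ≤ M →
          t - t₀ < δ₂ → ∃ y ∈ A, ⟪u, y⟫ = t ∧ dist y x ≤ ε/2 := by
        by_cases hMt : t₀ < M
        · refine ⟨ε/2 * (M - t₀) / (D + 1), div_pos (mul_pos (half_pos hε) (by linarith)) (by linarith), fun x hxA hxt t ht1 ht2 ht3 => ?_⟩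
          obtain ⟨y, hyA, hyt, hyd⟩ := seg_aux hAconv u x q hxA hqA t
            (by rw [hxt]; exact ht1.le) ht2 (by rw [hxt]; exact hMt)
          refine ⟨y, hyA, hyt, hyd.trans ?_⟩
          rw [hxt]
          have hdqx : dist q x ≤ D := dist_le_diam_of_mem hbd hqA hxA
          have h0 : (t - t₀) * (D + 1) ≤ ε / 2 * (M - t₀) := by
            rw [← le_div_iff₀ (by linarith : (0:ℝ) < D + 1)]
            exact ht3.le
          have h1 : (t - t₀)/(M - t₀) ≤ (ε/2)/(D + 1) := by
            rw [div_le_div_iff₀ (by linarith) (by linarith)]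
            linarith
          calc (t - t₀)/(M - t₀) * dist q x ≤ (ε/2)/(D + 1) * D := by
                apply mul_le_mul h1 hdqx dist_nonneg
                positivity
            _ ≤ ε/2 := by
                rw [div_mul_eq_mul_div, div_le_iff₀ (by linarith)]
                nlinarith
        · exact ⟨1, one_pos, fun x hxA hxt t ht1 ht2 ht3 =>
            absurd (ht1.trans_le ht2) hMt⟩
      have key_down : ∃ δ₃ > 0, ∀ x ∈ A, ⟪u, x⟫ = t₀ → ∀ t : ℝ, t < t₀ → m ≤ t →
          t₀ - t < δ₃ → ∃ y ∈ A, ⟪u, y⟫ = t ∧ dist y x ≤ ε/2 := by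
        by_cases hmt : m < t₀
        · refine ⟨ε/2 * (t₀ - m) / (D + 1), div_pos (mul_pos (half_pos hε) (by linarith)) (by linarith), fun x hxA hxt t ht1 ht2 ht3 => ?_⟩
          obtain ⟨y, hyA, hyt, hyd⟩ := seg_aux hAconv (-u) x p hxA hpA (-t)
            (by rw [inner_neg_left, hxt]; linarith)
            (by rw [inner_neg_left]; linarith)
            (by rw [inner_neg_left, inner_neg_left, hxt]; linarith)
          rw [inner_neg_left, neg_eq_iff_eq_neg, neg_neg] at hyt
          refine ⟨y, hyA, hyt, hyd.trans ?_⟩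
          rw [inner_neg_left, inner_neg_left, hxt]
          have hdpx : dist p x ≤ D := dist_le_diam_of_mem hbd hpA hxA
          have heq : (-t - -t₀) = t₀ - t := by ring
          have heq2 : (-m - -t₀) = t₀ - m := by ring
          rw [heq, heq2]
          have h0 : (t₀ - t) * (D + 1) ≤ ε / 2 * (t₀ - m) := by
            rw [← le_div_iff₀ (by linarith : (0:ℝ) < D + 1)]
            exact ht3.le
          have h1 : (t₀ - t)/(t₀ - m) ≤ (ε/2)/(D + 1) := by
            rw [div_le_div_iff₀ (by linarith) (by linarith)]
            linarith
          calc (t₀ - t)/(t₀ - m) * dist p x ≤ (ε/2)/(D + 1) * D := by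
                apply mul_le_mul h1 hdpx dist_nonneg
                positivity
            _ ≤ ε/2 := by
                rw [div_mul_eq_mul_div, div_le_iff₀ (by linarith)]
                nlinarith
        · exact ⟨1, one_pos, fun x hxA hxt t ht1 ht2 ht3 =>
            absurd (ht2.trans_lt ht1) hmt⟩
      obtain ⟨δ₂, hδ₂, hup⟩ := key_up
      obtain ⟨δ₃, hδ₃, hdown⟩ := key_down
      refine ⟨min δ₁ (min δ₂ δ₃), by positivity, fun z hz hdz => ?_⟩
      rw [hAset z] at hz ⊢
      rw [hAset z₀]
      set t : ℝ := ⟪u, z⟫ with ht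
      have htd : |t - t₀| < min δ₁ (min δ₂ δ₃) := by
        have h1 : t - t₀ = ⟪u, z - z₀⟫ := by rw [inner_sub_right]
        calc |t - t₀| = |⟪u, z - z₀⟫| := by rw [h1]
          _ ≤ ‖u‖ * ‖z - z₀‖ := abs_real_inner_le_norm u (z - z₀)
          _ = dist z z₀ := by rw [hu1, one_mul, dist_eq_norm]
          _ < _ := hdz
      obtain ⟨a, haA, hat⟩ := hz
      have hmt : m ≤ t := by rw [← hat]; exact isMinOn_iff.mp hpmin a haA
      have htM : t ≤ M := by rw [← hat]; exact isMaxOn_iff.mp hqmax a haA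
      have H1 : ∀ x ∈ {x ∈ A | ⟪u, x⟫ = t}, ∃ y ∈ {x ∈ A | ⟪u, x⟫ = t₀},
          dist x y ≤ ε/2 := by
        rintro x ⟨hxA, hxt⟩
        have : |⟪u, x⟫ - t₀| < δ₁ := by
          rw [hxt]
          exact htd.trans_le (min_le_left _ _)
        obtain ⟨y, hy, hdy⟩ := husc x hxA this
        exact ⟨y, hy, hdy.le⟩
      have H2 : ∀ x ∈ {x ∈ A | ⟪u, x⟫ = t₀}, ∃ y ∈ {x ∈ A | ⟪u, x⟫ = t},
          dist x y ≤ ε/2 := by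
        rintro x ⟨hxA, hxt⟩
        rcases lt_trichotomy t t₀ with hlt | heq | hgt
        · have h3 : t₀ - t < δ₃ := by
            have := htd.trans_le ((min_le_right _ _).trans (min_le_right _ _))
            rw [abs_sub_lt_iff] at this
            linarith [this.2]
          obtain ⟨y, hyA, hyt, hyd⟩ := hdown x hxA hxt t hlt hmt h3
          exact ⟨y, ⟨hyA, hyt⟩, by rw [dist_comm]; exact hyd⟩
        · exact ⟨x, ⟨hxA, by rw [hxt, heq]⟩, by rw [dist_self]; positivity⟩
        · have h2 : t - t₀ < δ₂ := by
            have := htd.trans_le ((min_le_right _ _).trans (min_le_left _ _))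
            rw [abs_sub_lt_iff] at this
            linarith [this.1]
          obtain ⟨y, hyA, hyt, hyd⟩ := hup x hxA hxt t hgt htM h2
          exact ⟨y, ⟨hyA, hyt⟩, by rw [dist_comm]; exact hyd⟩
      calc hausdorffDist {x ∈ A | ⟪u, x⟫ = t} {x ∈ A | ⟪u, x⟫ = t₀}
          ≤ ε/2 := hausdorffDist_le_of_mem_dist (by positivity) H1 H2
        _ < ε := half_lt_self hε
end

section
/- Let A ⊆ ℝ³ be the convex hull of the circle {(x₁−1)² + x₂² = 1, x₃ = 1} and the origin (0,0,0). Then for q = (0,0,1), the function f(x) = min{μ : (x,μ) ∈ A}, defined on the orthogonal projection of A onto the plane x₃ = 0, is not upper semicontinuous at the point (0,0). -/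
open Set

/-- The convex cone containing the hull. -/
def Kset : Set (ℝ × ℝ × ℝ) := {v | Real.sqrt ((v.1 - v.2.2)^2 + v.2.1^2) ≤ v.2.2}

lemma sqrt_abs (x y : ℝ) : Real.sqrt (x^2 + y^2) = ‖(⟨x, y⟩ : ℂ)‖ := by
  rw [Complex.norm_def, Complex.normSq_mk]; ring_nf

lemma Kset_convex : Convex ℝ Kset := by
  intro v hv w hw a b ha hb hab
  simp only [Kset, mem_setOf_eq] at *
  have h1 : ((⟨(a•v+b•w).1 - (a•v+b•w).2.2, (a•v+b•w).2.1⟩ : ℂ))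
      = a • (⟨v.1 - v.2.2, v.2.1⟩:ℂ) + b • (⟨w.1-w.2.2, w.2.1⟩:ℂ) := by
    simp [Complex.ext_iff, Prod.smul_def, smul_eq_mul]
    ring
  rw [sqrt_abs, h1]
  calc ‖(a • (⟨v.1 - v.2.2, v.2.1⟩:ℂ) + b • (⟨w.1-w.2.2, w.2.1⟩:ℂ))‖
      ≤ ‖(a • (⟨v.1 - v.2.2, v.2.1⟩:ℂ))‖ + ‖(b • (⟨w.1-w.2.2, w.2.1⟩:ℂ))‖ :=
        norm_add_le _ _
    _ = a * ‖(⟨v.1 - v.2.2, v.2.1⟩:ℂ)‖ + b * ‖(⟨w.1-w.2.2, w.2.1⟩:ℂ)‖ := by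
        simp [norm_smul, Real.norm_eq_abs, abs_of_nonneg ha, abs_of_nonneg hb]
    _ ≤ a * v.2.2 + b * w.2.2 := by
        rw [← sqrt_abs, ← sqrt_abs] at *
        exact add_le_add (mul_le_mul_of_nonneg_left hv ha) (mul_le_mul_of_nonneg_left hw hb)
    _ = (a•v+b•w).2.2 := by simp [Prod.smul_def, smul_eq_mul]

lemma hull_subset_K :
    convexHull ℝ ({v : ℝ × ℝ × ℝ | (v.1 - 1) ^ 2 + v.2.1 ^ 2 = 1 ∧ v.2.2 = 1} ∪ {(0, 0, 0)})
      ⊆ Kset := by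
  apply convexHull_min _ Kset_convex
  rintro v (⟨h1, h2⟩ | h)
  · simp only [Kset, mem_setOf_eq, h2]
    rw [h1, Real.sqrt_one]
  · simp only [mem_singleton_iff] at h
    subst h
    simp [Kset]

/-- For `A = conv({(x₁−1)² + x₂² = 1, x₃ = 1} ∪ {(0,0,0)}) ⊆ ℝ³` and
`q = (0,0,1)`, the function `f(x) = min{μ : (x,μ) ∈ A}` on the projection of `A`
onto the plane `x₃ = 0` is not upper semicontinuous at `(0,0)`. -/
theorem not_Pset_example :
    let A : Set (ℝ × ℝ × ℝ) := convexHull ℝ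
      ({v : ℝ × ℝ × ℝ | (v.1 - 1) ^ 2 + v.2.1 ^ 2 = 1 ∧ v.2.2 = 1} ∪ {(0, 0, 0)})
    let D : Set (ℝ × ℝ) := {p : ℝ × ℝ | ∃ μ : ℝ, (p.1, p.2, μ) ∈ A}
    let f : ℝ × ℝ → ℝ := fun p => sInf {μ : ℝ | (p.1, p.2, μ) ∈ A}
    ¬ UpperSemicontinuousWithinAt f D (0, 0) := by
  intro A D f
  have horig : ((0:ℝ), (0:ℝ), (0:ℝ)) ∈ A :=
    subset_convexHull ℝ _ (Or.inr rfl)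
  have hK := hull_subset_K
  -- f (0,0) = 0
  have hf0 : f (0, 0) = 0 := by
    show sInf {μ : ℝ | (((0:ℝ),(0:ℝ)).1, ((0:ℝ),(0:ℝ)).2, μ) ∈ A} = 0
    have hmem0 : (0:ℝ) ∈ {μ : ℝ | (((0:ℝ),(0:ℝ)).1, ((0:ℝ),(0:ℝ)).2, μ) ∈ A} := horig
    have hbd : ∀ μ ∈ {μ : ℝ | (((0:ℝ),(0:ℝ)).1, ((0:ℝ),(0:ℝ)).2, μ) ∈ A}, (0:ℝ) ≤ μ := by
      intro μ hμ
      have h2 := hK hμ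
      simp only [Kset, mem_setOf_eq] at h2
      have h0 : (0:ℝ) ≤ Real.sqrt ((0 - μ)^2 + 0^2) := Real.sqrt_nonneg _
      linarith
    exact le_antisymm (csInf_le ⟨0, hbd⟩ hmem0) (le_csInf ⟨0, hmem0⟩ hbd)
  -- membership of the curve points
  have hmem : ∀ t : ℝ, 0 < t → t ≤ 1 → ((t^2 : ℝ), t, (1 + t^2)/2) ∈ A := by
    intro t ht ht1
    have hden : (0:ℝ) < 1 + t^2 := by positivity
    set c : ℝ × ℝ × ℝ := (2*t^2/(1+t^2), 2*t/(1+t^2), 1) with hc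
    have hcA : c ∈ A := by
      apply subset_convexHull ℝ _
      left
      constructor
      · show (2*t^2/(1+t^2) - 1)^2 + (2*t/(1+t^2))^2 = 1
        field_simp
        ring
      · rfl
    have hlam0 : (0:ℝ) ≤ (1+t^2)/2 := by positivity
    have hlam1 : (0:ℝ) ≤ 1 - (1+t^2)/2 := by nlinarith
    have hcomb := (convex_convexHull ℝ _) hcA horig hlam0 hlam1 (by ring :
      ((1+t^2)/2) + (1 - (1+t^2)/2) = 1)
    have heq : ((1+t^2)/2) • c + (1 - (1+t^2)/2) • (((0:ℝ),(0:ℝ),(0:ℝ))) = ((t^2 : ℝ), t, (1 + t^2)/2) := by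
      simp only [hc, Prod.smul_def, smul_eq_mul, Prod.mk_add_mk, Prod.mk.injEq]
      refine ⟨?_, ?_, ?_⟩
      · field_simp; ring
      · field_simp; ring
      · ring
    rwa [heq] at hcomb
  -- lower bound on f along the curve
  have hlb : ∀ t : ℝ, 0 < t → t ≤ 1 → (1:ℝ)/2 ≤ f (t^2, t) := by
    intro t ht ht1
    show (1:ℝ)/2 ≤ sInf {μ : ℝ | (((t^2:ℝ),t).1, ((t^2:ℝ),t).2, μ) ∈ A}
    have hne : {μ : ℝ | (((t^2:ℝ),t).1, ((t^2:ℝ),t).2, μ) ∈ A}.Nonempty :=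
      ⟨(1 + t^2)/2, hmem t ht ht1⟩
    apply le_csInf hne
    intro μ hμ
    have hKμ := hK hμ
    simp only [Kset, mem_setOf_eq] at hKμ
    have hμ0 : 0 ≤ μ := le_trans (Real.sqrt_nonneg _) hKμ
    have hsq : ((t^2:ℝ) - μ)^2 + t^2 ≤ μ^2 := by
      have hs := Real.sq_sqrt (by positivity : (0:ℝ) ≤ ((t^2:ℝ) - μ)^2 + t^2)
      nlinarith [pow_le_pow_left₀ (Real.sqrt_nonneg (((t^2:ℝ) - μ)^2 + t^2)) hKμ 2]
    nlinarith [hsq, mul_pos ht ht, sq_nonneg t, sq_nonneg (t^2), sq_nonneg (t^2 - μ)]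
  -- conclude
  intro hUSC
  have h14 : f (0,0) < 1/4 := by rw [hf0]; norm_num
  have hev := hUSC (1/4) h14
  rw [Filter.eventually_iff, Metric.mem_nhdsWithin_iff] at hev
  obtain ⟨ε, hε, hball⟩ := hev
  set t := min (ε/2) 1 with htdef
  have ht0 : 0 < t := lt_min (by linarith) one_pos
  have ht1 : t ≤ 1 := min_le_right _ _
  have htε : t < ε := lt_of_le_of_lt (min_le_left _ _) (by linarith)
  have hdist : ((t^2, t) : ℝ × ℝ) ∈ Metric.ball ((0,0) : ℝ × ℝ) ε := by
    rw [Metric.mem_ball, Prod.dist_eq]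
    simp only [Real.dist_eq, sub_zero]
    rw [abs_of_nonneg (by positivity : (0:ℝ) ≤ t^2), abs_of_nonneg ht0.le]
    have : t^2 ≤ t := by nlinarith
    rw [max_eq_right this]
    exact htε
  have hD : ((t^2, t) : ℝ × ℝ) ∈ D := by
    show ∃ μ : ℝ, (((t^2:ℝ),t).1, ((t^2:ℝ),t).2, μ) ∈ A
    exact ⟨(1 + t^2)/2, hmem t ht0 ht1⟩
  have hlt := hball ⟨hdist, hD⟩
  have hge := hlb t ht0 ht1
  simp only [mem_setOf_eq] at hlt
  linarith
end

section
/- Let A ⊆ ℝⁿ be a convex compact set such that for every unit vector q, the orthogonal projection P_q : A → P_q A is an open map in the induced topologies. Then A is a P-set, i.e., for every unit vector q the function f_{A,q}(x) = min{μ : x + μq ∈ A} is continuous on P_q A. -/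
open Set

/-- If for every unit vector `q` the orthogonal projection `P_q : A → P_q A`
is an open map (induced topologies), then the convex compact set `A` is a P-set, i.e.
`f_{A,q}` is continuous on `P_q A` for every unit vector `q`. -/
theorem pset_of_open_projections (n : ℕ) (A : Set (EuclideanSpace ℝ (Fin n)))
    (hconv : Convex ℝ A) (hcomp : IsCompact A)
    (hopen : ∀ q : EuclideanSpace ℝ (Fin n), ‖q‖ = 1 →
      IsOpenMap (fun a : A =>
        (⟨a.1 - (inner ℝ q a.1 : ℝ) • q, ⟨a.1, a.2, rfl⟩⟩ :
          ((fun z : EuclideanSpace ℝ (Fin n) => z - (inner ℝ q z : ℝ) • q) '' A)))) :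
    ∀ q : EuclideanSpace ℝ (Fin n), ‖q‖ = 1 →
      ContinuousOn (fun x => sInf {μ : ℝ | x + μ • q ∈ A})
        ((fun z => z - (inner ℝ q z : ℝ) • q) '' A) := by
  intro q hq
  have hA_closed : IsClosed A := hcomp.isClosed
  set π : EuclideanSpace ℝ (Fin n) → EuclideanSpace ℝ (Fin n) :=
    fun z => z - (inner ℝ q z : ℝ) • q with hπ
  have hπcont : Continuous π := by
    apply continuous_id.sub
    exact ((continuous_const.inner continuous_id : Continuous fun z : EuclideanSpace ℝ (Fin n) => (inner ℝ q z : ℝ))).smul continuous_const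
  set s := π '' A with hs
  have hq2 : (inner ℝ q q : ℝ) = 1 := by
    rw [real_inner_self_eq_norm_sq, hq]; norm_num
  have hq0 : ∀ x ∈ s, (inner ℝ q x : ℝ) = 0 := by
    rintro x ⟨a, ha, rfl⟩
    simp [π, inner_sub_right, inner_smul_right, hq2, hq]
  have hπx : ∀ x, (inner ℝ q x : ℝ) = 0 → ∀ μ : ℝ, π (x + μ • q) = x := by
    intro x hx μ
    simp only [π, inner_add_right, inner_smul_right, hx, hq2, mul_one, zero_add]
    abel
  have hπa : ∀ a, π a + (inner ℝ q a : ℝ) • q = a := by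
    intro a; simp [π]
  -- the set S x
  set S : EuclideanSpace ℝ (Fin n) → Set ℝ := fun x => {μ : ℝ | x + μ • q ∈ A} with hS
  have hS_closed : ∀ x, IsClosed (S x) := by
    intro x
    have : Continuous fun μ : ℝ => x + μ • q :=
      continuous_const.add (continuous_id.smul continuous_const)
    exact hA_closed.preimage this
  obtain ⟨R, hR⟩ := hcomp.isBounded.exists_norm_le
  have hbdd : ∀ x ∈ s, BddBelow (S x) := by
    intro x hx
    refine ⟨-R, fun μ hμ => ?_⟩
    have h1 : (inner ℝ q (x + μ • q) : ℝ) = μ := by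
      simp [inner_add_right, inner_smul_right, hq0 x hx, hq2, hq]
    have h2 : |μ| ≤ R := by
      rw [← h1]
      calc |(inner ℝ q (x + μ • q) : ℝ)| ≤ ‖q‖ * ‖x + μ • q‖ := abs_real_inner_le_norm _ _
        _ = ‖x + μ • q‖ := by rw [hq, one_mul]
        _ ≤ R := hR _ hμ
    linarith [neg_abs_le μ]
  have hne : ∀ x ∈ s, (S x).Nonempty := by
    rintro x ⟨a, ha, rfl⟩
    refine ⟨(inner ℝ q a : ℝ), ?_⟩
    show π a + (inner ℝ q a : ℝ) • q ∈ A
    rw [hπa a]; exact ha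
  have hmem : ∀ x ∈ s, x + (sInf (S x)) • q ∈ A := by
    intro x hx
    exact (hS_closed x).csInf_mem (hne x hx) (hbdd x hx)
  -- continuity
  intro x₀ hx₀
  rw [ContinuousWithinAt]
  rw [tendsto_order]
  constructor
  · -- lower semicontinuity
    intro b hb
    set C := π '' (A ∩ {a | (inner ℝ q a : ℝ) ≤ b}) with hC
    have hCcl : IsClosed C := by
      have : IsCompact (A ∩ {a | (inner ℝ q a : ℝ) ≤ b}) := by
        apply hcomp.inter_right
        exact isClosed_le (continuous_const.inner continuous_id) continuous_const
      exact (this.image hπcont).isClosed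
    have hx₀C : x₀ ∉ C := by
      rintro ⟨a, ⟨haA, hab⟩, rfl⟩
      have h1 : (inner ℝ q a : ℝ) ∈ S (π a) := by
        show π a + (inner ℝ q a : ℝ) • q ∈ A
        rw [hπa a]; exact haA
      have h2 := csInf_le (hbdd _ hx₀) h1
      have hb' : b < sInf (S (π a)) := hb
      have hab' : (inner ℝ q a : ℝ) ≤ b := hab
      linarith
    have hev : ∀ᶠ x in nhdsWithin x₀ s, x ∈ Cᶜ :=
      Filter.Eventually.filter_mono nhdsWithin_le_nhds
        (hCcl.isOpen_compl.eventually_mem hx₀C)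
    filter_upwards [hev, self_mem_nhdsWithin] with x hxC hxs
    by_contra h
    push_neg at h
    apply hxC
    refine ⟨x + (sInf (S x)) • q, ⟨hmem x hxs, ?_⟩, hπx x (hq0 x hxs) _⟩
    simp only [mem_setOf_eq, inner_add_right, inner_smul_right, hq0 x hxs, hq2, mul_one, zero_add]
    exact h
  · -- upper semicontinuity
    intro b hb
    have ha₀ : x₀ + (sInf (S x₀)) • q ∈ A := hmem x₀ hx₀
    set U : Set A := {a : A | (inner ℝ q a.1 : ℝ) < b} with hU
    have hUopen : IsOpen U :=
      isOpen_lt (continuous_const.inner continuous_subtype_val) continuous_const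
    have hT := hopen q hq U hUopen
    -- the point in the image
    have hπa₀ : π (x₀ + (sInf (S x₀)) • q) = x₀ := hπx x₀ (hq0 x₀ hx₀) _
    have hx₀T : (⟨x₀, hx₀⟩ : s) ∈ (fun a : A =>
        (⟨a.1 - (inner ℝ q a.1 : ℝ) • q, ⟨a.1, a.2, rfl⟩⟩ : s)) '' U := by
      refine ⟨⟨x₀ + (sInf (S x₀)) • q, ha₀⟩, ?_, ?_⟩
      · simp only [hU, mem_setOf_eq, inner_add_right, inner_smul_right, hq0 x₀ hx₀,
          hq2, mul_one, zero_add]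
        exact hb
      · exact Subtype.ext hπa₀
    rw [isOpen_induced_iff] at hT
    obtain ⟨V, hVopen, hVT⟩ := hT
    have hx₀V : x₀ ∈ V := by
      have : (⟨x₀, hx₀⟩ : s) ∈ Subtype.val ⁻¹' V := hVT ▸ hx₀T
      exact this
    have hev : ∀ᶠ x in nhdsWithin x₀ s, x ∈ V :=
      Filter.Eventually.filter_mono nhdsWithin_le_nhds
        (hVopen.eventually_mem hx₀V)
    filter_upwards [hev, self_mem_nhdsWithin] with x hxV hxs
    have : (⟨x, hxs⟩ : s) ∈ (fun a : A =>
        (⟨a.1 - (inner ℝ q a.1 : ℝ) • q, ⟨a.1, a.2, rfl⟩⟩ : s)) '' U := by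
      rw [← hVT]; exact hxV
    obtain ⟨a, haU, hax⟩ := this
    have hπax : π a.1 = x := congrArg Subtype.val hax
    have hmemS : (inner ℝ q a.1 : ℝ) ∈ S x := by
      rw [← hπax]
      show π a.1 + (inner ℝ q a.1 : ℝ) • q ∈ A
      rw [hπa a.1]; exact a.2
    calc sInf (S x) ≤ (inner ℝ q a.1 : ℝ) := csInf_le (hbdd x hxs) hmemS
      _ < b := haU
end

section
/- Let (X,ρ) be a metric space, Y a Banach space, and F₁, F₂ : X → 2^Y set-valued mappings with nonempty closed convex images, uniformly continuous with moduli ω₁, ω₂ (i.e., h(Fᵢ(x₁),Fᵢ(x₂)) ≤ ωᵢ(ρ(x₁,x₂)) and ωᵢ(t) → 0 as t → 0⁺). Let d(x) = min{diam F₁(x), diam F₂(x)} < ∞ for all x. Suppose there exist γ : X → [0,∞) and α > 0 such that γ(x)·B₁(0) ⊆ F₁(x) − F₂(x) and d(x) ≤ α·γ(x) for all x ∈ X. Then G(x) = F₁(x) ∩ F₂(x) is nonempty for all x and uniformly continuous in the Hausdorff metric with modulus ω(t) = max{ω₁(t), ω₂(t)} + α(ω₁(t) + ω₂(t)). -/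
open Set Pointwise Metric Filter

lemma key_lemma {Y : Type*} [NormedAddCommGroup Y] [NormedSpace ℝ Y]
    {A B : Set Y} (hA : Convex ℝ A) (hB : Convex ℝ B)
    {a b : Y} (ha : a ∈ A) (hb : b ∈ B) {γ α : ℝ} (hγ : 0 ≤ γ) (hα : 0 < α)
    (hball : Metric.closedBall (0 : Y) γ ⊆ A - B)
    (hd : min (EMetric.diam A) (EMetric.diam B) ≤ ENNReal.ofReal (α * γ)) :
    ∃ z ∈ A ∩ B, dist z a ≤ α * dist a b ∨ dist z b ≤ α * dist a b := by
  have hαd : 0 ≤ α * dist a b := mul_nonneg hα.le dist_nonneg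
  have h0 : (0 : Y) ∈ A - B := hball (by simp [hγ])
  rcases Set.mem_sub.1 h0 with ⟨p, hp, q, hq, hpq⟩
  have hpq' : p = q := sub_eq_zero.mp hpq
  by_cases hdA : EMetric.diam A = 0
  · have hsub : A.Subsingleton := EMetric.diam_eq_zero_iff.mp hdA
    have hpa : p = a := hsub hp ha
    exact ⟨a, ⟨ha, by rw [← hpa, hpq']; exact hq⟩, Or.inl (by simpa using hαd)⟩
  by_cases hdB : EMetric.diam B = 0
  · have hsub : B.Subsingleton := EMetric.diam_eq_zero_iff.mp hdB
    have hqb : q = b := hsub hq hb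
    exact ⟨b, ⟨by rw [← hqb, ← hpq']; exact hp, hb⟩, Or.inr (by simpa using hαd)⟩
  -- now both diameters positive, so γ > 0
  have hγpos : 0 < γ := by
    by_contra hγ0
    push_neg at hγ0
    have : γ = 0 := le_antisymm hγ0 hγ
    rw [this, mul_zero, ENNReal.ofReal_zero, le_zero_iff] at hd
    rcases min_eq_iff.mp hd with ⟨h,-⟩|⟨h,-⟩ <;> [exact hdA h; exact hdB h]
  by_cases hab : a = b
  · exact ⟨a, ⟨ha, hab ▸ hb⟩, Or.inl (by simpa using hαd)⟩
  set r := dist a b with hr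
  have hrpos : 0 < r := dist_pos.mpr hab
  -- the point -(γ/r)•(a-b) is in the closed ball
  have hmem : -((γ / r) • (a - b)) ∈ Metric.closedBall (0 : Y) γ := by
    simp only [Metric.mem_closedBall, dist_zero_right, norm_neg, norm_smul,
      Real.norm_eq_abs, abs_of_nonneg (div_nonneg hγ hrpos.le)]
    rw [← dist_eq_norm, ← hr, div_mul_cancel₀]
    exact hrpos.ne'
  rcases Set.mem_sub.1 (hball hmem) with ⟨a', ha', b', hb', hab'⟩
  set lam := r / (γ + r) with hlam
  have hγr : 0 < γ + r := by linarith
  have hlam0 : 0 ≤ lam := div_nonneg hrpos.le hγr.le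
  have hlam1 : lam ≤ 1 := by
    rw [hlam, div_le_one hγr]; linarith
  set z := (1 - lam) • a + lam • a' with hz
  set z' := (1 - lam) • b + lam • b' with hz'
  have hzA : z ∈ A := hA ha ha' (by linarith) hlam0 (by ring)
  have hz'B : z' ∈ B := hB hb hb' (by linarith) hlam0 (by ring)
  have hzz : z = z' := by
    have : z - z' = (1 - lam) • (a - b) + lam • (a' - b') := by
      rw [hz, hz']; module
    rw [hab'] at this
    have h2 : z - z' = ((1 - lam) - lam * (γ / r)) • (a - b) := by
      rw [this]; module
    have h3 : (1 - lam) - lam * (γ / r) = 0 := by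
      rw [hlam]; field_simp; ring
    rw [h3, zero_smul, sub_eq_zero] at h2
    exact h2
  refine ⟨z, ⟨hzA, hzz ▸ hz'B⟩, ?_⟩
  have hlamγ : lam * γ ≤ r := by
    rw [hlam, div_mul_eq_mul_div, div_le_iff₀ hγr]
    nlinarith
  rcases min_le_iff.1 hd with hdle | hdle
  · -- diam A ≤ αγ : use dist z a = lam * dist a' a ≤ lam * α * γ ≤ α r
    left
    have hedist : edist a a' ≤ ENNReal.ofReal (α * γ) :=
      le_trans (EMetric.edist_le_diam_of_mem ha ha') hdle
    have hda : dist a a' ≤ α * γ := by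
      rw [← edist_le_ofReal (by positivity)]; exact hedist
    have : dist z a = lam * dist a' a := by
      rw [hz, dist_eq_norm]
      have : (1 - lam) • a + lam • a' - a = lam • (a' - a) := by module
      rw [this, norm_smul, Real.norm_eq_abs, abs_of_nonneg hlam0, dist_eq_norm]
    rw [this, dist_comm a' a]
    calc lam * dist a a' ≤ lam * (α * γ) := by
            exact mul_le_mul_of_nonneg_left hda hlam0
      _ = α * (lam * γ) := by ring
      _ ≤ α * r := mul_le_mul_of_nonneg_left hlamγ hα.le
  · right
    have hedist : edist b b' ≤ ENNReal.ofReal (α * γ) :=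
      le_trans (EMetric.edist_le_diam_of_mem hb hb') hdle
    have hdb : dist b b' ≤ α * γ := by
      rw [← edist_le_ofReal (by positivity)]; exact hedist
    have : dist z b = lam * dist b' b := by
      rw [hzz, hz', dist_eq_norm]
      have : (1 - lam) • b + lam • b' - b = lam • (b' - b) := by module
      rw [this, norm_smul, Real.norm_eq_abs, abs_of_nonneg hlam0, dist_eq_norm]
    rw [this, dist_comm b' b]
    calc lam * dist b b' ≤ lam * (α * γ) := mul_le_mul_of_nonneg_left hdb hlam0
      _ = α * (lam * γ) := by ring
      _ ≤ α * r := mul_le_mul_of_nonneg_left hlamγ hα.le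

/-- Theorem 3.1: uniform continuity of the intersection `G = F₁ ∩ F₂`
under a uniform interior-ball condition. -/
theorem intersection_uniformly_continuous {X : Type*} [MetricSpace X]
    {Y : Type*} [NormedAddCommGroup Y] [NormedSpace ℝ Y] [CompleteSpace Y]
    (F₁ F₂ : X → Set Y)
    (hne : ∀ x, (F₁ x).Nonempty ∧ (F₂ x).Nonempty)
    (hcl : ∀ x, IsClosed (F₁ x) ∧ IsClosed (F₂ x))
    (hcv : ∀ x, Convex ℝ (F₁ x) ∧ Convex ℝ (F₂ x))
    (ω₁ ω₂ : ℝ → ℝ)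
    (hω₁0 : Tendsto ω₁ (nhdsWithin 0 (Ioi 0)) (nhds 0))
    (hω₂0 : Tendsto ω₂ (nhdsWithin 0 (Ioi 0)) (nhds 0))
    (hω₁nn : ∀ t, 0 ≤ ω₁ t) (hω₂nn : ∀ t, 0 ≤ ω₂ t)
    (hmod₁ : ∀ x₁ x₂ : X, EMetric.hausdorffEdist (F₁ x₁) (F₁ x₂)
      ≤ ENNReal.ofReal (ω₁ (dist x₁ x₂)))
    (hmod₂ : ∀ x₁ x₂ : X, EMetric.hausdorffEdist (F₂ x₁) (F₂ x₂)
      ≤ ENNReal.ofReal (ω₂ (dist x₁ x₂)))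
    (hfin : ∀ x, min (EMetric.diam (F₁ x)) (EMetric.diam (F₂ x)) < ⊤)
    (γ : X → ℝ) (hγnn : ∀ x, 0 ≤ γ x) (α : ℝ) (hα : 0 < α)
    (hball : ∀ x, Metric.closedBall (0 : Y) (γ x) ⊆ F₁ x - F₂ x)
    (hd : ∀ x, min (EMetric.diam (F₁ x)) (EMetric.diam (F₂ x))
      ≤ ENNReal.ofReal (α * γ x)) :
    (∀ x, (F₁ x ∩ F₂ x).Nonempty) ∧
    (∀ x₁ x₂ : X, EMetric.hausdorffEdist (F₁ x₁ ∩ F₂ x₁) (F₁ x₂ ∩ F₂ x₂)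
      ≤ ENNReal.ofReal (max (ω₁ (dist x₁ x₂)) (ω₂ (dist x₁ x₂))
          + α * (ω₁ (dist x₁ x₂) + ω₂ (dist x₁ x₂)))) := by
  have hGne : ∀ x, (F₁ x ∩ F₂ x).Nonempty := by
    intro x
    have h0 : (0 : Y) ∈ F₁ x - F₂ x := hball x (by simp [hγnn x])
    rcases Set.mem_sub.1 h0 with ⟨p, hp, q, hq, hpq⟩
    exact ⟨p, hp, sub_eq_zero.mp hpq ▸ hq⟩
  refine ⟨hGne, ?_⟩
  -- one-sided estimate
  have main : ∀ x₁ x₂ : X, ∀ y ∈ F₁ x₁ ∩ F₂ x₁,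
      EMetric.infEdist y (F₁ x₂ ∩ F₂ x₂)
        ≤ ENNReal.ofReal (max (ω₁ (dist x₁ x₂)) (ω₂ (dist x₁ x₂))
            + α * (ω₁ (dist x₁ x₂) + ω₂ (dist x₁ x₂))) := by
    intro x₁ x₂ y hy
    set t := dist x₁ x₂
    set C := max (ω₁ t) (ω₂ t) + α * (ω₁ t + ω₂ t) with hC
    have hCnn : 0 ≤ C := by
      have := hω₁nn t; have := hω₂nn t
      have : 0 ≤ max (ω₁ t) (ω₂ t) := le_max_of_le_left (hω₁nn t)
      nlinarith [hω₁nn t, hω₂nn t]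
    refine ENNReal.le_of_forall_pos_le_add fun ε hε _ => ?_
    set δ : ℝ := (ε : ℝ) / (1 + 2 * α) with hδ
    have h2α : 0 < 1 + 2 * α := by linarith
    have hδpos : 0 < δ := div_pos (by exact_mod_cast hε) h2α
    -- find y₁ ∈ F₁ x₂ close to y
    have step : ∀ (F : X → Set Y) (ω : ℝ → ℝ), (∀ s, 0 ≤ ω s) →
        (EMetric.hausdorffEdist (F x₁) (F x₂) ≤ ENNReal.ofReal (ω t)) →
        y ∈ F x₁ → ∃ y' ∈ F x₂, dist y y' < ω t + δ := by
      intro F ω hωnn hmod hyF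
      have h1 : EMetric.infEdist y (F x₂) < ENNReal.ofReal (ω t + δ) := by
        calc EMetric.infEdist y (F x₂)
            ≤ EMetric.hausdorffEdist (F x₁) (F x₂) :=
              EMetric.infEdist_le_hausdorffEdist_of_mem hyF
          _ ≤ ENNReal.ofReal (ω t) := hmod
          _ < ENNReal.ofReal (ω t + δ) := by
              rw [ENNReal.ofReal_lt_ofReal_iff (by linarith [hωnn t])]
              linarith
      rcases EMetric.infEdist_lt_iff.1 h1 with ⟨y', hy', hdy⟩
      exact ⟨y', hy', (edist_lt_ofReal).1 hdy⟩
    obtain ⟨y₁, hy₁, hdy₁⟩ := step F₁ ω₁ hω₁nn (hmod₁ x₁ x₂) hy.1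
    obtain ⟨y₂, hy₂, hdy₂⟩ := step F₂ ω₂ hω₂nn (hmod₂ x₁ x₂) hy.2
    obtain ⟨z, hz, hcase⟩ := key_lemma (hcv x₂).1 (hcv x₂).2 hy₁ hy₂
      (hγnn x₂) hα (hball x₂) (hd x₂)
    have hd12 : dist y₁ y₂ ≤ ω₁ t + ω₂ t + 2 * δ := by
      calc dist y₁ y₂ ≤ dist y₁ y + dist y y₂ := dist_triangle _ _ _
        _ ≤ (ω₁ t + δ) + (ω₂ t + δ) := by
            rw [dist_comm y₁ y]; linarith [hdy₁.le, hdy₂.le]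
        _ = ω₁ t + ω₂ t + 2 * δ := by ring
    have hαd12 : α * dist y₁ y₂ ≤ α * (ω₁ t + ω₂ t + 2 * δ) :=
      mul_le_mul_of_nonneg_left hd12 hα.le
    have hyz : dist y z ≤ C + (1 + 2 * α) * δ := by
      rcases hcase with h | h
      · calc dist y z ≤ dist y y₁ + dist y₁ z := dist_triangle _ _ _
          _ ≤ (ω₁ t + δ) + α * (ω₁ t + ω₂ t + 2 * δ) := by
              rw [dist_comm y₁ z]; linarith [hdy₁.le]
          _ ≤ C + (1 + 2 * α) * δ := by
              have := le_max_left (ω₁ t) (ω₂ t); rw [hC]; nlinarith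
      · calc dist y z ≤ dist y y₂ + dist y₂ z := dist_triangle _ _ _
          _ ≤ (ω₂ t + δ) + α * (ω₁ t + ω₂ t + 2 * δ) := by
              rw [dist_comm y₂ z]; linarith [hdy₂.le]
          _ ≤ C + (1 + 2 * α) * δ := by
              have := le_max_right (ω₁ t) (ω₂ t); rw [hC]; nlinarith
    have hδε : (1 + 2 * α) * δ = (ε : ℝ) := by
      rw [hδ]; field_simp
    calc EMetric.infEdist y (F₁ x₂ ∩ F₂ x₂) ≤ edist y z := EMetric.infEdist_le_edist_of_mem hz
      _ = ENNReal.ofReal (dist y z) := edist_dist y z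
      _ ≤ ENNReal.ofReal (C + (1 + 2 * α) * δ) := ENNReal.ofReal_le_ofReal hyz
      _ = ENNReal.ofReal (C + (ε : ℝ)) := by rw [hδε]
      _ ≤ ENNReal.ofReal C + ENNReal.ofReal (ε : ℝ) := ENNReal.ofReal_add_le
      _ = ENNReal.ofReal C + ε := by rw [ENNReal.ofReal_coe_nnreal]
  intro x₁ x₂
  apply EMetric.hausdorffEdist_le_of_infEdist
  · exact fun y hy => main x₁ x₂ y hy
  · intro y hy
    have := main x₂ x₁ y hy
    rwa [dist_comm x₂ x₁] at this
end

section
/- Let X be a Banach space and A₁, A₂ ⊆ X convex closed bounded sets with d = max{diam A₁, diam A₂}. Suppose closed balls B_α(x₁) ⊆ A₁ and B_α(x₂) ⊆ A₂ for some α > 0. Then for every β ∈ (0, α): h(A₁ ∗ B_β(0), A₂ ∗ B_β(0)) ≤ (d/(α−β))·h(A₁, A₂), where A ∗ B = {x : x + B ⊆ A} is the geometric (Minkowski–Pontryagin) difference. -/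
open Metric Set

/-- The geometric (Minkowski–Pontryagin) difference of two sets. -/
def geomDiff {E : Type*} [AddCommGroup E] (A B : Set E) : Set E :=
  {x : E | ∀ b ∈ B, x + b ∈ A}

private lemma geomDiff_aux {X : Type*} [NormedAddCommGroup X] [NormedSpace ℝ X]
    (A₁ A₂ : Set X) (hA₂c : Convex ℝ A₂) (hA₂b : Bornology.IsBounded A₂)
    (α β h' d : ℝ) (hβ0 : 0 < β) (hβα : β < α) (hh' : 0 < h') (x₂ : X)
    (hb₂ : closedBall x₂ α ⊆ A₂) (hdiam : diam A₂ ≤ d)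
    (hnear : ∀ y ∈ A₁, ∃ a ∈ A₂, dist y a < h')
    (x : X) (hx : x ∈ geomDiff A₁ (closedBall 0 β)) :
    ∃ z ∈ geomDiff A₂ (closedBall (0 : X) β),
      dist x z ≤ (h' / (α - β + h')) * (d + h') := by
  have hD : 0 < α - β + h' := by linarith
  set l : ℝ := h' / (α - β + h') with hl
  have hl0 : 0 < l := div_pos hh' hD
  have hl1 : l < 1 := (div_lt_one hD).2 (by linarith)
  have hx₂ : x₂ ∈ A₂ := hb₂ (mem_closedBall_self (by linarith))
  refine ⟨x + l • (x₂ - x), ?_, ?_⟩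
  · -- membership in the erosion of A₂
    intro v hv
    have hvβ : ‖v‖ ≤ β := by simpa using mem_closedBall_iff_norm.1 hv
    have hxv : x + v ∈ A₁ := hx v hv
    obtain ⟨a, ha, hda⟩ := hnear _ hxv
    set e : X := (x + v) - a with he
    have heh : ‖e‖ ≤ h' := by
      have : dist (x + v) a = ‖e‖ := by rw [dist_eq_norm]
      linarith [this ▸ hda]
    set w : X := x₂ + v + ((1 - l) / l) • e with hw
    have hcoef : 0 ≤ (1 - l) / l := div_nonneg (by linarith) hl0.le
    have hcoef' : (1 - l) / l = (α - β) / h' := by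
      rw [hl]
      field_simp
      ring
    have hwmem : w ∈ A₂ := by
      apply hb₂
      rw [mem_closedBall_iff_norm]
      have : w - x₂ = v + ((1 - l) / l) • e := by rw [hw]; abel
      rw [this]
      calc ‖v + ((1 - l) / l) • e‖ ≤ ‖v‖ + ‖((1 - l) / l) • e‖ := norm_add_le _ _
        _ = ‖v‖ + ((1 - l) / l) * ‖e‖ := by rw [norm_smul, Real.norm_of_nonneg hcoef]
        _ ≤ β + ((α - β) / h') * h' := by
            rw [hcoef']
            have h1 : (α - β) / h' * ‖e‖ ≤ (α - β) / h' * h' :=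
              mul_le_mul_of_nonneg_left heh (div_nonneg (by linarith) hh'.le)
            linarith
        _ = α := by field_simp; ring
    have hcomb : l • w + (1 - l) • a ∈ A₂ := hA₂c hwmem ha hl0.le (by linarith) (by ring)
    have heq : x + l • (x₂ - x) + v = l • w + (1 - l) • a := by
      have hle : l • (((1 - l) / l) • e) = (1 - l) • e := by
        rw [smul_smul, mul_div_cancel₀ _ hl0.ne']
      rw [hw, he, smul_add, smul_add, hle]
      have : a = (x + v) - e := by rw [he]; abel
      rw [this]
      module
    rw [heq]
    exact hcomb
  · -- distance estimate
    have hx0 : x ∈ A₁ := by simpa using hx 0 (by simp [hβ0.le])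
    obtain ⟨a, ha, hda⟩ := hnear _ hx0
    have hdx : ‖x₂ - x‖ ≤ d + h' := by
      have h1 : dist x₂ a ≤ diam A₂ := dist_le_diam_of_mem hA₂b hx₂ ha
      calc ‖x₂ - x‖ = dist x₂ x := by rw [dist_eq_norm]
        _ ≤ dist x₂ a + dist a x := dist_triangle _ _ _
        _ ≤ d + h' := by rw [dist_comm a x]; linarith
    have : dist x (x + l • (x₂ - x)) = l * ‖x₂ - x‖ := by
      rw [dist_eq_norm]
      simp [norm_smul, Real.norm_of_nonneg hl0.le]
    rw [this]
    exact mul_le_mul_of_nonneg_left hdx hl0.le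

/-- Proposition 3.2: Lipschitz estimate for the geometric difference with
a ball, with respect to the Hausdorff distance. -/
theorem geomDiff_hausdorffDist_le {X : Type*} [NormedAddCommGroup X] [NormedSpace ℝ X]
    (A₁ A₂ : Set X)
    (hA₁ : Convex ℝ A₁ ∧ IsClosed A₁ ∧ Bornology.IsBounded A₁)
    (hA₂ : Convex ℝ A₂ ∧ IsClosed A₂ ∧ Bornology.IsBounded A₂)
    (d : ℝ) (hd : d = max (diam A₁) (diam A₂))
    (α : ℝ) (hα : 0 < α) (x₁ x₂ : X)
    (hb₁ : closedBall x₁ α ⊆ A₁) (hb₂ : closedBall x₂ α ⊆ A₂)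
    (β : ℝ) (hβ : β ∈ Set.Ioo 0 α) :
    hausdorffDist (geomDiff A₁ (closedBall (0 : X) β)) (geomDiff A₂ (closedBall (0 : X) β))
      ≤ (d / (α - β)) * hausdorffDist A₁ A₂ := by
  obtain ⟨hβ0, hβα⟩ := hβ
  have hαβ : 0 < α - β := by linarith
  have hd0 : 0 ≤ d := hd ▸ le_max_of_le_left diam_nonneg
  have hRHS0 : 0 ≤ (d / (α - β)) * hausdorffDist A₁ A₂ :=
    mul_nonneg (div_nonneg hd0 hαβ.le) hausdorffDist_nonneg
  have hx₁A : x₁ ∈ A₁ := hb₁ (mem_closedBall_self hα.le)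
  have hx₂A : x₂ ∈ A₂ := hb₂ (mem_closedBall_self hα.le)
  cases subsingleton_or_nontrivial X with
  | inl hs =>
    have e1 : A₁ = Set.univ := Set.eq_univ_of_forall (fun y => by rwa [Subsingleton.elim y x₁])
    have e2 : A₂ = Set.univ := Set.eq_univ_of_forall (fun y => by rwa [Subsingleton.elim y x₂])
    have hAeq : A₁ = A₂ := by rw [e1, e2]
    rw [hAeq, hausdorffDist_self_zero]
    exact mul_nonneg (div_nonneg hd0 hαβ.le) hausdorffDist_nonneg
  | inr hnt =>
    -- α - β < d
    obtain ⟨u, hu⟩ := exists_ne (0 : X)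
    have hαd : α ≤ d := by
      have h1 : x₁ + α • (‖u‖⁻¹ • u) ∈ A₁ := by
        apply hb₁
        rw [mem_closedBall_iff_norm]
        have : ‖u‖ ≠ 0 := norm_ne_zero_iff.2 hu
        simp [norm_smul, abs_of_nonneg hα.le, norm_inv, this, abs_of_nonneg (inv_nonneg.2 (norm_nonneg u)),
          inv_mul_cancel₀ this]
      have h2 : dist (x₁ + α • (‖u‖⁻¹ • u)) x₁ = α := by
        rw [dist_eq_norm]
        have hn : ‖u‖ ≠ 0 := norm_ne_zero_iff.2 hu
        have : x₁ + α • (‖u‖⁻¹ • u) - x₁ = α • (‖u‖⁻¹ • u) := by abel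
        rw [this, norm_smul, norm_smul, norm_inv, Real.norm_of_nonneg hα.le, norm_norm,
          inv_mul_cancel₀ hn, mul_one]
      have h3 : dist (x₁ + α • (‖u‖⁻¹ • u)) x₁ ≤ diam A₁ :=
        dist_le_diam_of_mem hA₁.2.2 h1 hx₁A
      rw [h2] at h3
      exact h3.trans (hd ▸ le_max_left _ _)
    have hαβd : α - β ≤ d := by linarith
    set c : ℝ := d / (α - β) with hc
    have hc0 : 0 ≤ c := div_nonneg hd0 hαβ.le
    set H : ℝ := hausdorffDist A₁ A₂ with hH
    have hfin : EMetric.hausdorffEdist A₁ A₂ ≠ ⊤ :=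
      hausdorffEdist_ne_top_of_nonempty_of_bounded ⟨x₁, hx₁A⟩ ⟨x₂, hx₂A⟩ hA₁.2.2 hA₂.2.2
    apply le_of_forall_pos_le_add
    intro ε hε
    set h' : ℝ := H + ε / (c + 1) with hh'def
    have hh'H : H < h' := by
      have h0 : 0 < ε / (c + 1) := div_pos hε (by linarith)
      rw [hh'def]
      linarith
    have hh'0 : 0 < h' := lt_of_le_of_lt hausdorffDist_nonneg hh'H
    have hnear₁ : ∀ y ∈ A₁, ∃ a ∈ A₂, dist y a < h' := fun y hy =>
      exists_dist_lt_of_hausdorffDist_lt hy hh'H hfin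
    have hnear₂ : ∀ y ∈ A₂, ∃ a ∈ A₁, dist y a < h' := fun y hy => by
      have := exists_dist_lt_of_hausdorffDist_lt (s := A₂) (t := A₁) hy
        (by rwa [hausdorffDist_comm]) (by rwa [EMetric.hausdorffEdist_comm])
      exact this
    have hkey : (h' / (α - β + h')) * (d + h') ≤ c * h' := by
      rw [hc, div_mul_eq_mul_div, div_mul_eq_mul_div,
        div_le_div_iff₀ (by linarith) hαβ]
      nlinarith [mul_le_mul_of_nonneg_left hαβd (mul_pos hh'0 hh'0).le]
    have hmain : hausdorffDist (geomDiff A₁ (closedBall (0 : X) β))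
        (geomDiff A₂ (closedBall (0 : X) β)) ≤ c * h' := by
      apply hausdorffDist_le_of_mem_dist (mul_nonneg hc0 hh'0.le)
      · intro x hx
        obtain ⟨z, hz, hdz⟩ := geomDiff_aux A₁ A₂ hA₂.1 hA₂.2.2 α β h' d hβ0 hβα hh'0
          x₂ hb₂ (hd ▸ le_max_right _ _) hnear₁ x hx
        exact ⟨z, hz, hdz.trans hkey⟩
      · intro x hx
        obtain ⟨z, hz, hdz⟩ := geomDiff_aux A₂ A₁ hA₁.1 hA₁.2.2 α β h' d hβ0 hβα hh'0
          x₁ hb₁ (hd ▸ le_max_left _ _) hnear₂ x hx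
        exact ⟨z, hz, hdz.trans hkey⟩
    refine hmain.trans ?_
    have h2 : c * (ε / (c + 1)) ≤ ε := by
      rw [mul_div_assoc', div_le_iff₀ (by linarith : (0:ℝ) < c + 1)]
      nlinarith
    have hexp : c * (H + ε / (c + 1)) = c * H + c * (ε / (c + 1)) := by ring
    rw [hh'def, hexp]
    linarith
end

section
/- Let X be a Hilbert space and A₁, A₂ ⊆ X nonempty convex closed bounded sets with Aᵢ ⊆ B_r(aᵢ), i = 1,2. Then the Chebyshev centers satisfy c(Aᵢ) ∈ Aᵢ and ‖c(A₁) − c(A₂)‖ ≤ 2√(6·r·h(A₁,A₂)) + h(A₁,A₂). -/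
open Metric Set
open scoped RealInnerProductSpace

/-- `c` is a Chebyshev center of `A`: it minimizes `x ↦ sup_{a ∈ A} ‖x − a‖`. -/
def IsChebyshevCenter {X : Type*} [NormedAddCommGroup X] (A : Set X) (c : X) : Prop :=
  ∀ x : X, sSup ((fun a => ‖c - a‖) '' A) ≤ sSup ((fun a => ‖x - a‖) '' A)

namespace ChebAux

variable {X : Type*} [NormedAddCommGroup X] [InnerProductSpace ℝ X] [CompleteSpace X]

noncomputable def R (A : Set X) (x : X) : ℝ := sSup ((fun a => ‖x - a‖) '' A)

lemma bddAbove_image {A : Set X} (hb : Bornology.IsBounded A) (x : X) :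
    BddAbove ((fun a => ‖x - a‖) '' A) := by
  obtain ⟨M, hM⟩ := hb.subset_closedBall x
  refine ⟨M, ?_⟩
  rintro - ⟨a, ha, rfl⟩
  have := hM ha
  rw [mem_closedBall, dist_comm] at this
  simpa [dist_eq_norm] using this

lemma le_R {A : Set X} (hb : Bornology.IsBounded A) {x a : X} (ha : a ∈ A) :
    ‖x - a‖ ≤ R A x := le_csSup (bddAbove_image hb x) ⟨a, ha, rfl⟩

lemma R_le {A : Set X} (hA : A.Nonempty) {x : X} {B : ℝ} (h : ∀ a ∈ A, ‖x - a‖ ≤ B) :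
    R A x ≤ B := csSup_le (hA.image _) (by rintro - ⟨a, ha, rfl⟩; exact h a ha)

lemma R_nonneg {A : Set X} (hA : A.Nonempty) (hb : Bornology.IsBounded A) (x : X) :
    0 ≤ R A x := by
  obtain ⟨a, ha⟩ := hA
  exact (norm_nonneg _).trans (le_R hb ha)

lemma cheb_mem {A : Set X} (hne : A.Nonempty) (hconv : Convex ℝ A) (hcl : IsClosed A)
    (hb : Bornology.IsBounded A) {c : X} (hc : IsChebyshevCenter A c) : c ∈ A := by
  obtain ⟨p, hp, hpd⟩ := exists_norm_eq_iInf_of_complete_convex hne hcl.isComplete hconv c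
  have hproj : ∀ a ∈ A, (inner ℝ (c - p) (a - p) : ℝ) ≤ 0 :=
    (norm_eq_iInf_iff_real_inner_le_zero hconv hp).1 hpd
  have key : ∀ a ∈ A, ‖p - a‖ ^ 2 + ‖c - p‖ ^ 2 ≤ ‖c - a‖ ^ 2 := by
    intro a ha
    have h1 : c - a = (c - p) + (p - a) := by abel
    have h2 : (inner ℝ (c - p) (p - a) : ℝ) = - (inner ℝ (c - p) (a - p) : ℝ) := by
      rw [← inner_neg_right]; congr 1; abel
    have h3 := norm_add_sq_real (c - p) (p - a)
    rw [h1, h3, h2]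
    nlinarith [hproj a ha]
  have hRc : 0 ≤ R A c := R_nonneg hne hb c
  have hcp : ‖c - p‖ ≤ R A c := le_R hb hp
  have hKnn : 0 ≤ (R A c) ^ 2 - ‖c - p‖ ^ 2 := by
    nlinarith [norm_nonneg (c - p)]
  have hRp : R A p ≤ Real.sqrt ((R A c) ^ 2 - ‖c - p‖ ^ 2) := by
    refine R_le hne fun a ha => ?_
    rw [show ‖p - a‖ = Real.sqrt (‖p - a‖ ^ 2) from (Real.sqrt_sq (norm_nonneg _)).symm]
    refine Real.sqrt_le_sqrt ?_
    have := key a ha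
    have h4 : ‖c - a‖ ≤ R A c := le_R hb ha
    nlinarith [norm_nonneg (c - a)]
  have hcRp : R A c ≤ R A p := hc p
  have : (R A c) ^ 2 ≤ (R A c) ^ 2 - ‖c - p‖ ^ 2 := by
    have h5 : R A c ≤ Real.sqrt ((R A c) ^ 2 - ‖c - p‖ ^ 2) := hcRp.trans hRp
    nlinarith [Real.sq_sqrt hKnn, Real.sqrt_nonneg ((R A c) ^ 2 - ‖c - p‖ ^ 2)]
  have : ‖c - p‖ = 0 := by nlinarith [norm_nonneg (c - p)]
  have : c = p := by rwa [← sub_eq_zero, ← norm_eq_zero]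
  rwa [this]

lemma cross {A B : Set X} (hBne : B.Nonempty) (hBb : Bornology.IsBounded B)
    (c : X) (hfin : EMetric.hausdorffEdist A B ≠ ⊤) :
    ∀ a ∈ A, ‖c - a‖ ≤ R B c + hausdorffDist A B := by
  intro a ha
  have hinf : infDist a B ≤ hausdorffDist A B := infDist_le_hausdorffDist_of_mem ha hfin
  by_contra hcon
  push_neg at hcon
  have hlt : infDist a B < ‖c - a‖ - R B c := by linarith
  obtain ⟨b, hb, hab⟩ := (infDist_lt_iff hBne).1 hlt
  have h1 : ‖c - a‖ ≤ ‖c - b‖ + ‖b - a‖ := by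
    have : c - a = (c - b) + (b - a) := by abel
    rw [this]; exact norm_add_le _ _
  have h2 : ‖c - b‖ ≤ R B c := le_R hBb hb
  have h3 : ‖b - a‖ = dist a b := by rw [dist_comm, dist_eq_norm]
  linarith

lemma midpoint_bound {A : Set X} (hne : A.Nonempty) (hb : Bornology.IsBounded A)
    (c₁ c₂ : X) (hc : IsChebyshevCenter A c₁) {s : ℝ} (hs : ∀ a ∈ A, ‖c₂ - a‖ ≤ s) :
    ‖c₁ - c₂‖ ^ 2 ≤ 2 * s ^ 2 - 2 * (R A c₁) ^ 2 := by
  set m : X := (2⁻¹ : ℝ) • (c₁ + c₂) with hm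
  have hpar : ∀ a ∈ A, 4 * ‖m - a‖ ^ 2 + ‖c₁ - c₂‖ ^ 2
      = 2 * ‖c₁ - a‖ ^ 2 + 2 * ‖c₂ - a‖ ^ 2 := by
    intro a _
    have hid : (c₁ - a) + (c₂ - a) = (2 : ℝ) • (m - a) := by
      rw [hm]
      module
    have hid2 : (c₁ - a) - (c₂ - a) = c₁ - c₂ := by abel
    have := parallelogram_law_with_norm ℝ (c₁ - a) (c₂ - a)
    rw [hid, hid2, norm_smul] at this
    simp only [Real.norm_ofNat] at this
    nlinarith [this]
  set K : ℝ := (2 * (R A c₁) ^ 2 + 2 * s ^ 2 - ‖c₁ - c₂‖ ^ 2) / 4 with hK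
  have hsq : ∀ a ∈ A, ‖m - a‖ ^ 2 ≤ K := by
    intro a ha
    have h1 : ‖c₁ - a‖ ≤ R A c₁ := le_R hb ha
    have h2 := hs a ha
    have h3 := hpar a ha
    have h4 : 0 ≤ ‖c₂ - a‖ := norm_nonneg _
    have h5 : 0 ≤ ‖c₁ - a‖ := norm_nonneg _
    rw [hK]; nlinarith
  have hKnn : 0 ≤ K := by
    obtain ⟨a, ha⟩ := hne
    exact (sq_nonneg ‖m - a‖).trans (hsq a ha)
  have hRm : R A m ≤ Real.sqrt K := by
    refine R_le hne fun a ha => ?_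
    rw [show ‖m - a‖ = Real.sqrt (‖m - a‖ ^ 2) from (Real.sqrt_sq (norm_nonneg _)).symm]
    exact Real.sqrt_le_sqrt (hsq a ha)
  have hle : R A c₁ ≤ Real.sqrt K := (hc m).trans hRm
  have hRnn : 0 ≤ R A c₁ := R_nonneg hne hb c₁
  have : (R A c₁) ^ 2 ≤ K := by
    nlinarith [Real.sq_sqrt hKnn, Real.sqrt_nonneg K]
  rw [hK] at this
  nlinarith

end ChebAux

/-- Proposition 3.3: Hölder-type estimate for Chebyshev centers of
nearby convex closed bounded sets in a Hilbert space. -/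
theorem chebyshev_center_estimate {X : Type*}
    [NormedAddCommGroup X] [InnerProductSpace ℝ X] [CompleteSpace X]
    (A₁ A₂ : Set X)
    (hA₁ : (A₁ : Set X).Nonempty ∧ Convex ℝ A₁ ∧ IsClosed A₁ ∧ Bornology.IsBounded A₁)
    (hA₂ : (A₂ : Set X).Nonempty ∧ Convex ℝ A₂ ∧ IsClosed A₂ ∧ Bornology.IsBounded A₂)
    (r : ℝ) (a₁ a₂ : X) (hr₁ : A₁ ⊆ closedBall a₁ r) (hr₂ : A₂ ⊆ closedBall a₂ r)
    (c₁ c₂ : X) (hc₁ : IsChebyshevCenter A₁ c₁) (hc₂ : IsChebyshevCenter A₂ c₂) :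
    c₁ ∈ A₁ ∧ c₂ ∈ A₂ ∧
    ‖c₁ - c₂‖ ≤ 2 * Real.sqrt (6 * r * hausdorffDist A₁ A₂) + hausdorffDist A₁ A₂ := by
  obtain ⟨hne₁, hconv₁, hcl₁, hb₁⟩ := hA₁
  obtain ⟨hne₂, hconv₂, hcl₂, hb₂⟩ := hA₂
  have hmem₁ : c₁ ∈ A₁ := ChebAux.cheb_mem hne₁ hconv₁ hcl₁ hb₁ hc₁
  have hmem₂ : c₂ ∈ A₂ := ChebAux.cheb_mem hne₂ hconv₂ hcl₂ hb₂ hc₂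
  refine ⟨hmem₁, hmem₂, ?_⟩
  set h : ℝ := hausdorffDist A₁ A₂ with hdef
  have hh : 0 ≤ h := hausdorffDist_nonneg
  have hfin : EMetric.hausdorffEdist A₁ A₂ ≠ ⊤ :=
    hausdorffEdist_ne_top_of_nonempty_of_bounded hne₁ hne₂ hb₁ hb₂
  have hfin' : EMetric.hausdorffEdist A₂ A₁ ≠ ⊤ := by
    rw [EMetric.hausdorffEdist] at hfin ⊢
    rwa [EMetric.hausdorffEdist_comm]
  set ρ₁ : ℝ := ChebAux.R A₁ c₁ with hρ₁
  set ρ₂ : ℝ := ChebAux.R A₂ c₂ with hρ₂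
  have hρ₁nn : 0 ≤ ρ₁ := ChebAux.R_nonneg hne₁ hb₁ c₁
  have hρ₂nn : 0 ≤ ρ₂ := ChebAux.R_nonneg hne₂ hb₂ c₂
  have hρ₁r : ρ₁ ≤ r := by
    refine (hc₁ a₁).trans (ChebAux.R_le hne₁ fun a ha => ?_)
    have := hr₁ ha
    rw [mem_closedBall, dist_comm] at this
    rwa [← dist_eq_norm]
  have hρ₂r : ρ₂ ≤ r := by
    refine (hc₂ a₂).trans (ChebAux.R_le hne₂ fun a ha => ?_)
    have := hr₂ ha
    rw [mem_closedBall, dist_comm] at this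
    rwa [← dist_eq_norm]
  have hr0 : 0 ≤ r := by
    obtain ⟨a, ha⟩ := hne₁
    have := hr₁ ha
    rw [mem_closedBall] at this
    exact dist_nonneg.trans this
  have hcross₁ : ∀ a ∈ A₁, ‖c₂ - a‖ ≤ ρ₂ + h :=
    ChebAux.cross hne₂ hb₂ c₂ hfin
  have hcross₂ : ∀ a ∈ A₂, ‖c₁ - a‖ ≤ ρ₁ + h := by
    have := ChebAux.cross hne₁ hb₁ c₁ hfin'
    rwa [hausdorffDist_comm] at this
  set d : ℝ := ‖c₁ - c₂‖ with hd
  have hdnn : 0 ≤ d := norm_nonneg _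
  have e1 : d ^ 2 ≤ 2 * (ρ₂ + h) ^ 2 - 2 * ρ₁ ^ 2 :=
    ChebAux.midpoint_bound hne₁ hb₁ c₁ c₂ hc₁ hcross₁
  have e2 : d ^ 2 ≤ 2 * (ρ₁ + h) ^ 2 - 2 * ρ₂ ^ 2 := by
    have := ChebAux.midpoint_bound hne₂ hb₂ c₂ c₁ hc₂ hcross₂
    rwa [norm_sub_rev] at this
  have esum : d ^ 2 ≤ 2 * h * (ρ₁ + ρ₂) + 2 * h ^ 2 := by nlinarith
  have hdr : d ≤ ρ₁ + h := by
    have := hcross₂ c₂ hmem₂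
    rwa [← hd] at this
  have hsqrt24 : Real.sqrt (24 * (r * h)) = 2 * Real.sqrt (6 * r * h) := by
    rw [show (24 : ℝ) * (r * h) = 4 * (6 * r * h) by ring,
      Real.sqrt_mul (by norm_num : (0:ℝ) ≤ 4),
      show Real.sqrt 4 = 2 by
        rw [show (4:ℝ) = 2 ^ 2 by norm_num, Real.sqrt_sq (by norm_num : (0:ℝ) ≤ 2)]]
  rcases le_or_gt r (24 * h) with hcase | hcase
  · -- d ≤ ρ₁ + h ≤ r + h ≤ 2√(6rh) + h
    have hr6 : r ≤ 2 * Real.sqrt (6 * r * h) := by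
      rw [← hsqrt24]
      calc r = Real.sqrt (r ^ 2) := (Real.sqrt_sq hr0).symm
        _ ≤ Real.sqrt (24 * (r * h)) := Real.sqrt_le_sqrt (by nlinarith)
    linarith
  · -- d² ≤ 4rh + 2h² ≤ 24rh
    have hd2 : d ^ 2 ≤ 24 * (r * h) := by nlinarith
    have : d ≤ 2 * Real.sqrt (6 * r * h) := by
      rw [← hsqrt24]
      calc d = Real.sqrt (d ^ 2) := (Real.sqrt_sq hdnn).symm
        _ ≤ Real.sqrt (24 * (r * h)) := Real.sqrt_le_sqrt hd2
    linarith
end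

section
/- Let X, Y be Hilbert spaces and X₁ ⊆ X a convex subset. Let w : X₁ → Y be uniformly continuous. Then for every ε > 0 there exists a Lipschitz continuous function v : X₁ → Y with ‖v(x) − w(x)‖ < ε for all x ∈ X₁. -/
open RealInnerProductSpace
open Finset in
lemma sum_smul_sub_eq_zero {ι Y : Type*} [NormedAddCommGroup Y] [InnerProductSpace ℝ Y]
    (t : Finset ι) (μ : ι → ℝ) (q : ι → Y) (hsum : ∑ i ∈ t, μ i = 1) :
    ∑ i ∈ t, μ i • (q i - (∑ j ∈ t, μ j • q j)) = 0 := by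
  simp only [smul_sub, Finset.sum_sub_distrib, ← Finset.sum_smul, hsum, one_smul, sub_self]

open Finset in
/-- bias-variance: `∑ μ i ‖q i - c‖² = ∑ μ i ‖q i - b‖² + ‖b - c‖²` with `b` the barycenter. -/
lemma bias_variance {ι Y : Type*} [NormedAddCommGroup Y] [InnerProductSpace ℝ Y]
    (t : Finset ι) (μ : ι → ℝ) (q : ι → Y) (hsum : ∑ i ∈ t, μ i = 1) (c : Y) :
    ∑ i ∈ t, μ i * ‖q i - c‖^2
      = ∑ i ∈ t, μ i * ‖q i - (∑ j ∈ t, μ j • q j)‖^2 + ‖(∑ j ∈ t, μ j • q j) - c‖^2 := by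
  set b := ∑ j ∈ t, μ j • q j with hb
  have expand : ∀ i, ‖q i - c‖^2 = ‖q i - b‖^2 + 2 * (inner ℝ (q i - b) (b - c) : ℝ) + ‖b - c‖^2 := by
    intro i
    have : q i - c = (q i - b) + (b - c) := by abel
    rw [this, @norm_add_sq_real]
  calc ∑ i ∈ t, μ i * ‖q i - c‖^2
      = ∑ i ∈ t, (μ i * ‖q i - b‖^2 + μ i * (2 * (inner ℝ (q i - b) (b - c) : ℝ)) + μ i * ‖b - c‖^2) := by
        refine Finset.sum_congr rfl fun i _ => ?_; rw [expand i]; ring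
    _ = ∑ i ∈ t, μ i * ‖q i - b‖^2 + 2 * (∑ i ∈ t, (inner ℝ (μ i • (q i - b)) (b - c) : ℝ))
          + (∑ i ∈ t, μ i) * ‖b - c‖^2 := by
        rw [Finset.sum_add_distrib, Finset.sum_add_distrib, ← Finset.sum_mul, Finset.mul_sum]
        congr 1; congr 1
        refine Finset.sum_congr rfl fun i _ => ?_
        rw [real_inner_smul_left]; ring
    _ = ∑ i ∈ t, μ i * ‖q i - b‖^2 + ‖b - c‖^2 := by
        rw [← sum_inner, sum_smul_sub_eq_zero t μ q hsum, inner_zero_left, hsum]; ring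

open Finset in
lemma pair_variance {ι Y : Type*} [NormedAddCommGroup Y] [InnerProductSpace ℝ Y]
    (t : Finset ι) (μ : ι → ℝ) (q : ι → Y) (hsum : ∑ i ∈ t, μ i = 1) :
    ∑ i ∈ t, ∑ j ∈ t, μ i * μ j * ‖q i - q j‖^2
      = 2 * ∑ i ∈ t, μ i * ‖q i - (∑ j ∈ t, μ j • q j)‖^2 := by
  set b := ∑ j ∈ t, μ j • q j with hb
  have h1 : ∀ j ∈ t, ∑ i ∈ t, μ i * μ j * ‖q i - q j‖^2
      = μ j * (∑ i ∈ t, μ i * ‖q i - b‖^2 + ‖b - q j‖^2) := by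
    intro j _
    rw [← bias_variance t μ q hsum (q j), Finset.mul_sum]
    exact Finset.sum_congr rfl fun i _ => by ring
  rw [Finset.sum_comm]
  rw [Finset.sum_congr rfl h1]
  have : ∑ j ∈ t, μ j * (∑ i ∈ t, μ i * ‖q i - b‖^2 + ‖b - q j‖^2)
      = (∑ j ∈ t, μ j) * (∑ i ∈ t, μ i * ‖q i - b‖^2) + ∑ j ∈ t, μ j * ‖b - q j‖^2 := by
    rw [Finset.sum_mul]
    rw [← Finset.sum_add_distrib]
    exact Finset.sum_congr rfl fun j _ => by ring
  rw [this, hsum, one_mul]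
  have : ∑ j ∈ t, μ j * ‖b - q j‖^2 = ∑ j ∈ t, μ j * ‖q j - b‖^2 := by
    exact Finset.sum_congr rfl fun j _ => by rw [norm_sub_rev]
  rw [this]; ring

lemma continuous_finset_sup' {Z ι : Type*} [TopologicalSpace Z] {t : Finset ι}
    (ht : t.Nonempty) {g : ι → Z → ℝ} (hg : ∀ i, Continuous (g i)) :
    Continuous fun z => t.sup' ht fun i => g i z := by
  induction ht using Finset.Nonempty.cons_induction with
  | singleton a => simpa using hg a
  | cons a s h hs ih =>
      have : (fun z => (Finset.cons a s h).sup' (Finset.cons_nonempty h) fun i => g i z)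
          = fun z => max (g a z) (s.sup' hs fun i => g i z) := by
        funext z; rw [Finset.sup'_cons]
      rw [this]
      exact (hg a).max ih

/-- Kirszbraun's finite geometric lemma: the balls `B(f i, K ‖x - p i‖)` have a common point. -/
lemma kirszbraun_finite {X Y ι : Type*}
    [NormedAddCommGroup X] [InnerProductSpace ℝ X]
    [NormedAddCommGroup Y] [InnerProductSpace ℝ Y]
    (K : ℝ) (hK : 0 ≤ K) (t : Finset ι) (ht : t.Nonempty) (p : ι → X) (f : ι → Y)
    (hpair : ∀ i ∈ t, ∀ j ∈ t, ‖f i - f j‖ ≤ K * ‖p i - p j‖) (x : X) :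
    ∃ z : Y, ∀ i ∈ t, ‖z - f i‖^2 - K^2 * ‖x - p i‖^2 ≤ 0 := by
  classical
  set g : ι → Y → ℝ := fun i z => ‖z - f i‖^2 - K^2 * ‖x - p i‖^2 with hg
  have hgc : ∀ i, Continuous (g i) := by
    intro i
    exact ((continuous_id.sub continuous_const).norm.pow 2).sub continuous_const
  set C : Set Y := convexHull ℝ (f '' ↑t) with hC
  have hCcpt : IsCompact C := ((t.finite_toSet.image f).isCompact_convexHull ℝ)
  have hCconv : Convex ℝ C := convex_convexHull ℝ _
  have hCne : C.Nonempty := (Set.Nonempty.image f (by exact ht.to_set)).convexHull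
  set φ : Y → ℝ := fun z => t.sup' ht fun i => g i z with hφ
  have hφc : Continuous φ := continuous_finset_sup' ht hgc
  obtain ⟨z₀, hz₀C, hz₀min⟩ := hCcpt.exists_isMinOn hCne hφc.continuousOn
  set m : ℝ := φ z₀ with hm
  refine ⟨z₀, fun i hi => ?_⟩
  have hgle : ∀ i ∈ t, g i z₀ ≤ m := fun i hi => Finset.le_sup' (f := fun i => g i z₀) hi
  suffices hm0 : m ≤ 0 by exact le_trans (hgle i hi) hm0
  -- active set
  set I : Finset ι := t.filter (fun i => g i z₀ = m) with hI
  have hIt : I ⊆ t := Finset.filter_subset _ _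
  have hIne : I.Nonempty := by
    obtain ⟨i, hit, hieq⟩ := Finset.exists_mem_eq_sup' ht (fun i => g i z₀)
    exact ⟨i, Finset.mem_filter.2 ⟨hit, hieq.symm⟩⟩
  -- z₀ lies in the convex hull of the active points
  have hzI : z₀ ∈ convexHull ℝ (f '' ↑I) := by
    by_contra hzD
    set D : Set Y := convexHull ℝ (f '' ↑I) with hD
    have hDcpt : IsCompact D := ((I.finite_toSet.image f).isCompact_convexHull ℝ)
    have hDconv : Convex ℝ D := convex_convexHull ℝ _
    have hDne : D.Nonempty := (Set.Nonempty.image f hIne.to_set).convexHull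
    have hDC : D ⊆ C := convexHull_mono (Set.image_mono (f := f) (by exact_mod_cast hIt))
    obtain ⟨q, hqD, hqmin⟩ := exists_norm_eq_iInf_of_complete_convex hDne hDcpt.isComplete hDconv z₀
    have hproj : ∀ u ∈ D, (inner ℝ (z₀ - q) (u - q) : ℝ) ≤ 0 :=
      (norm_eq_iInf_iff_real_inner_le_zero hDconv hqD).1 hqmin
    set d : Y := q - z₀ with hd
    have hdne : d ≠ 0 := by
      intro h
      rw [hd, sub_eq_zero] at h
      exact hzD (h ▸ hqD)
    have hdpos : (0:ℝ) < ‖d‖^2 := by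
      have := norm_pos_iff.mpr hdne
      positivity
    have hkey : ∀ i ∈ I, ‖d‖^2 ≤ (inner ℝ (f i - z₀) d : ℝ) := by
      intro i hiI
      have hfiD : f i ∈ D := subset_convexHull ℝ _ ⟨i, by exact_mod_cast hiI, rfl⟩
      have h1 : (inner ℝ (z₀ - q) (f i - q) : ℝ) ≤ 0 := hproj _ hfiD
      have h2 : (0:ℝ) ≤ inner ℝ (f i - q) d := by
        rw [hd]
        have : (inner ℝ (f i - q) (q - z₀) : ℝ) = - inner ℝ (z₀ - q) (f i - q) := by
          rw [← inner_neg_left, neg_sub, real_inner_comm]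
        rw [this]; linarith
      have h3 : f i - z₀ = (f i - q) + d := by rw [hd]; abel
      rw [h3, inner_add_left, real_inner_self_eq_norm_sq]
      linarith
    -- perturbation
    have hpert : ∀ θ : ℝ, 0 < θ → θ ≤ 1 → z₀ + θ • d ∈ C ∧
        (∀ i ∈ I, g i (z₀ + θ • d) ≤ m - θ * ‖d‖^2) ∧
        (∀ i ∈ t, i ∉ I → g i (z₀ + θ • d) ≤ g i z₀ + θ * (2 * ‖z₀ - f i‖ * ‖d‖ + ‖d‖^2)) := by
      intro θ hθ0 hθ1
      have hmem : z₀ + θ • d ∈ C := by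
        have : z₀ + θ • d = (1 - θ) • z₀ + θ • q := by
          rw [hd]; rw [smul_sub]; rw [sub_smul, one_smul]; abel
        rw [this]
        exact hCconv hz₀C (hDC hqD) (by linarith) (le_of_lt hθ0) (by ring)
      have hexp : ∀ i, g i (z₀ + θ • d)
          = g i z₀ + 2 * θ * (inner ℝ (z₀ - f i) d : ℝ) + θ^2 * ‖d‖^2 := by
        intro i
        simp only [hg]
        have : z₀ + θ • d - f i = (z₀ - f i) + θ • d := by abel
        rw [this, @norm_add_sq_real, real_inner_smul_right, norm_smul, Real.norm_eq_abs,
          abs_of_pos hθ0, mul_pow]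
        ring
      refine ⟨hmem, fun i hiI => ?_, fun i hit hiI => ?_⟩
      · have hIg : g i z₀ = m := (Finset.mem_filter.1 hiI).2
        have h4 : (inner ℝ (z₀ - f i) d : ℝ) = - inner ℝ (f i - z₀) d := by
          rw [← inner_neg_left, neg_sub]
        have h5 := hkey i hiI
        rw [hexp i, hIg, h4]
        have hA : θ * ‖d‖^2 ≤ θ * (inner ℝ (f i - z₀) d : ℝ) :=
          mul_le_mul_of_nonneg_left h5 hθ0.le
        have hBb : θ^2 * ‖d‖^2 ≤ θ * ‖d‖^2 := by nlinarith [mul_nonneg (mul_nonneg hθ0.le (sub_nonneg.2 hθ1)) (sq_nonneg ‖d‖)]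
        linarith
      · rw [hexp i]
        have hcs : (inner ℝ (z₀ - f i) d : ℝ) ≤ ‖z₀ - f i‖ * ‖d‖ := real_inner_le_norm _ _
        have hA : 2 * θ * (inner ℝ (z₀ - f i) d : ℝ) ≤ 2 * θ * (‖z₀ - f i‖ * ‖d‖) := by
          have := mul_le_mul_of_nonneg_left hcs hθ0.le
          linarith
        have hBb : θ^2 * ‖d‖^2 ≤ θ * ‖d‖^2 := by nlinarith [mul_nonneg (mul_nonneg hθ0.le (sub_nonneg.2 hθ1)) (sq_nonneg ‖d‖)]
        linarith
    by_cases hti : (t \ I).Nonempty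
    · set B : ι → ℝ := fun i => 2 * ‖z₀ - f i‖ * ‖d‖ + ‖d‖^2 with hB
      have hBpos : ∀ i, 0 < B i + 1 := by
        intro i
        have : 0 ≤ B i := by positivity
        linarith
      set θ : ℝ := min 1 ((t \ I).inf' hti (fun i => (m - g i z₀) / (B i + 1))) with hθ
      have hθpos : 0 < θ := by
        rw [hθ, lt_min_iff]
        refine ⟨one_pos, ?_⟩
        rw [Finset.lt_inf'_iff]
        intro i hisd
        obtain ⟨hit', hiI'⟩ := Finset.mem_sdiff.1 hisd
        have h6 : g i z₀ ≠ m := fun h => hiI' (Finset.mem_filter.2 ⟨hit', h⟩)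
        have h7 : g i z₀ < m := lt_of_le_of_ne (hgle i hit') h6
        exact div_pos (by linarith) (hBpos i)
      have hθ1 : θ ≤ 1 := min_le_left _ _
      obtain ⟨hmem, hact, hinact⟩ := hpert θ hθpos hθ1
      have hlt : φ (z₀ + θ • d) < m := by
        rw [hφ, Finset.sup'_lt_iff]
        intro i hit'
        by_cases hiI' : i ∈ I
        · have := hact i hiI'
          nlinarith [hdpos]
        · have h8 := hinact i hit' hiI'
          have h9 : θ ≤ (m - g i z₀) / (B i + 1) :=
            le_trans (min_le_right _ _) (Finset.inf'_le _ (Finset.mem_sdiff.2 ⟨hit', hiI'⟩))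
          have h10 : θ * (B i + 1) ≤ m - g i z₀ := by
            rw [← le_div_iff₀ (hBpos i)]; exact h9
          have h11 : θ * B i < θ * (B i + 1) := by nlinarith
          calc g i (z₀ + θ • d) ≤ g i z₀ + θ * B i := h8
            _ < g i z₀ + θ * (B i + 1) := by linarith
            _ ≤ m := by linarith
      exact absurd (hz₀min hmem) (not_le.2 hlt)
    · -- all constraints active
      obtain ⟨hmem, hact, _⟩ := hpert (1/2) (by norm_num) (by norm_num)
      have hlt : φ (z₀ + (1/2 : ℝ) • d) < m := by
        rw [hφ, Finset.sup'_lt_iff]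
        intro i hit'
        have hiI : i ∈ I := by
          by_contra h
          exact hti ⟨i, Finset.mem_sdiff.2 ⟨hit', h⟩⟩
        have := hact i hiI
        nlinarith [hdpos]
      exact absurd (hz₀min hmem) (not_le.2 hlt)
  -- use the convex combination to show `m ≤ 0`
  rw [convexHull_eq] at hzI
  obtain ⟨ι', s, wgt, zf, hw0, hw1, hzs, hcm⟩ := hzI
  have hex : ∀ i : ι', i ∈ s → ∃ j, j ∈ I ∧ f j = zf i := by
    intro i hi
    obtain ⟨j, hjI, hjf⟩ := hzs i hi
    exact ⟨j, by exact_mod_cast hjI, hjf⟩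
  choose jj hjjI hjjf using hex
  -- work on the attached finset
  set t' : Finset {i // i ∈ s} := s.attach with ht'
  set μ : {i // i ∈ s} → ℝ := fun i => wgt i.1 with hμ
  set qY : {i // i ∈ s} → Y := fun i => f (jj i.1 i.2) with hqY
  set qX : {i // i ∈ s} → X := fun i => p (jj i.1 i.2) with hqX
  have hμ0 : ∀ i ∈ t', 0 ≤ μ i := fun i _ => hw0 i.1 i.2
  have hsum' : ∑ i ∈ t', μ i = 1 := by
    rw [hμ, ht', Finset.sum_attach s wgt]; exact hw1
  have hbary : ∑ i ∈ t', μ i • qY i = z₀ := by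
    have : ∑ i ∈ t', μ i • qY i = ∑ i ∈ t', wgt i.1 • zf i.1 := by
      refine Finset.sum_congr rfl fun i _ => ?_
      simp only [hμ, hqY, hjjf]
    rw [this, ht', Finset.sum_attach s (fun i => wgt i • zf i)]
    rw [← Finset.centerMass_eq_of_sum_1 _ _ hw1]
    exact hcm
  have hactive : ∀ i : {i // i ∈ s}, g (jj i.1 i.2) z₀ = m := by
    intro i
    exact (Finset.mem_filter.1 (hjjI i.1 i.2)).2
  -- the key chain of inequalities
  have e1 : m = ∑ i ∈ t', μ i * ‖z₀ - qY i‖^2 - K^2 * ∑ i ∈ t', μ i * ‖x - qX i‖^2 := by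
    have : m = ∑ i ∈ t', μ i * (g (jj i.1 i.2) z₀) := by
      rw [Finset.sum_congr rfl (fun i _ => by rw [hactive i]), ← Finset.sum_mul, hsum', one_mul]
    rw [this]
    simp only [hg, hqY, hqX]
    rw [Finset.mul_sum]
    rw [← Finset.sum_sub_distrib]
    refine Finset.sum_congr rfl fun i _ => ?_
    ring
  have e2 : ∑ i ∈ t', μ i * ‖z₀ - qY i‖^2 = ∑ i ∈ t', μ i * ‖qY i - z₀‖^2 :=
    Finset.sum_congr rfl fun i _ => by rw [norm_sub_rev]
  have e3 : 2 * ∑ i ∈ t', μ i * ‖qY i - z₀‖^2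
      = ∑ i ∈ t', ∑ j ∈ t', μ i * μ j * ‖qY i - qY j‖^2 := by
    rw [pair_variance t' μ qY hsum', hbary]
  have e4 : ∑ i ∈ t', ∑ j ∈ t', μ i * μ j * ‖qY i - qY j‖^2
      ≤ K^2 * ∑ i ∈ t', ∑ j ∈ t', μ i * μ j * ‖qX i - qX j‖^2 := by
    rw [Finset.mul_sum]
    refine Finset.sum_le_sum fun i hi => ?_
    rw [Finset.mul_sum]
    refine Finset.sum_le_sum fun j hj => ?_
    have hp := hpair _ (hIt (hjjI i.1 i.2)) _ (hIt (hjjI j.1 j.2))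
    have hsq : ‖qY i - qY j‖^2 ≤ K^2 * ‖qX i - qX j‖^2 := by
      rw [hqY, hqX]
      nlinarith [norm_nonneg (f (jj i.1 i.2) - f (jj j.1 j.2)), norm_nonneg (p (jj i.1 i.2) - p (jj j.1 j.2))]
    calc μ i * μ j * ‖qY i - qY j‖^2 ≤ μ i * μ j * (K^2 * ‖qX i - qX j‖^2) := by
          exact mul_le_mul_of_nonneg_left hsq (mul_nonneg (hμ0 i hi) (hμ0 j hj))
      _ = K^2 * (μ i * μ j * ‖qX i - qX j‖^2) := by ring
  have e5 : ∑ i ∈ t', ∑ j ∈ t', μ i * μ j * ‖qX i - qX j‖^2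
      ≤ 2 * ∑ i ∈ t', μ i * ‖qX i - x‖^2 := by
    rw [pair_variance t' μ qX hsum']
    have := bias_variance t' μ qX hsum' x
    nlinarith [sq_nonneg ‖(∑ j ∈ t', μ j • qX j) - x‖]
  have e6 : ∑ i ∈ t', μ i * ‖qX i - x‖^2 = ∑ i ∈ t', μ i * ‖x - qX i‖^2 :=
    Finset.sum_congr rfl fun i _ => by rw [norm_sub_rev]
  rw [e1, e2]
  nlinarith [e3, e4, e5, e6, sq_nonneg K]
/-- One-point Kirszbraun: a common point of all balls `B(f s, K ‖x - s‖)`, `s ∈ S`. -/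
lemma kirszbraun_point {X Y : Type*}
    [NormedAddCommGroup X] [InnerProductSpace ℝ X]
    [NormedAddCommGroup Y] [InnerProductSpace ℝ Y] [CompleteSpace Y]
    (K : ℝ) (hK : 0 ≤ K) (S : Set X) (hSne : S.Nonempty) (f : X → Y)
    (hpair : ∀ a ∈ S, ∀ b ∈ S, ‖f a - f b‖ ≤ K * ‖a - b‖) (x : X) :
    ∃ z : Y, ∀ s ∈ S, ‖z - f s‖ ≤ K * ‖x - s‖ := by
  classical
  obtain ⟨g, hgdef⟩ : ∃ g' : X → Y → ℝ,
      g' = fun s z => ‖z - f s‖^2 - K^2 * ‖x - s‖^2 := ⟨_, rfl⟩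
  have hgc : ∀ s : X, Continuous (g s) := by
    intro s
    simp only [hgdef]
    exact ((continuous_id.sub continuous_const).norm.pow 2).sub continuous_const
  obtain ⟨φ, hφ_eq⟩ : ∃ φ' : (F : Finset X) → F.Nonempty → Y → ℝ,
      ∀ F h z, φ' F h z = F.sup' h fun i => g i z := ⟨fun F h z => F.sup' h fun i => g i z,
        fun _ _ _ => rfl⟩
  have hg_le_φ : ∀ (F : Finset X) (h : F.Nonempty) (z : Y) (i : X), i ∈ F → g i z ≤ φ F h z := by
    intro F h z i hi
    rw [hφ_eq]
    exact Finset.le_sup' (f := fun i => g i z) hi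
  have hφ_le : ∀ (F : Finset X) (h : F.Nonempty) (z : Y) (c : ℝ),
      (∀ i ∈ F, g i z ≤ c) → φ F h z ≤ c := by
    intro F h z c hc
    rw [hφ_eq]
    exact Finset.sup'_le h _ hc
  have hφmono : ∀ (F F' : Finset X) (h : F.Nonempty) (h' : F'.Nonempty) (z : Y), F ⊆ F' →
      φ F h z ≤ φ F' h' z :=
    fun F F' h h' z hsub => hφ_le F h z _ fun i hi => hg_le_φ F' h' z i (hsub hi)
  have hbdd : ∀ (F : Finset X) (h : F.Nonempty), BddBelow (Set.range (φ F h)) := by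
    intro F h
    refine ⟨-(K^2 * ‖x - h.choose‖^2), ?_⟩
    rintro r ⟨z, rfl⟩
    calc -(K^2 * ‖x - h.choose‖^2) ≤ g h.choose z := by
          simp only [hgdef]; nlinarith [sq_nonneg ‖z - f h.choose‖]
      _ ≤ φ F h z := hg_le_φ F h z _ h.choose_spec
  obtain ⟨m, hm_eq⟩ : ∃ m' : (F : Finset X) → F.Nonempty → ℝ,
      ∀ F h, m' F h = ⨅ z : Y, φ F h z := ⟨_, fun _ _ => rfl⟩
  have hm_le : ∀ F h z, m F h ≤ φ F h z := by
    intro F h z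
    rw [hm_eq]
    exact ciInf_le (hbdd F h) z
  have hm0 : ∀ F h, ↑F ⊆ S → m F h ≤ 0 := by
    intro F h hFS
    obtain ⟨z, hz⟩ := kirszbraun_finite K hK F h id f
      (fun i hi j hj => hpair i (hFS hi) j (hFS hj)) x
    refine le_trans (hm_le F h z) (hφ_le F h z 0 fun i hi => ?_)
    simp only [hgdef]
    simpa using hz i hi
  have hmono : ∀ (F F' : Finset X) (h : F.Nonempty) (h' : F'.Nonempty), F ⊆ F' →
      m F h ≤ m F' h' := by
    intro F F' h h' hsub
    rw [hm_eq, hm_eq]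
    exact ciInf_mono (hbdd F h) fun z => hφmono F F' h h' z hsub
  -- parallelogram estimate
  have hpara : ∀ (F : Finset X) (h : F.Nonempty) (y y' : Y),
      ‖y - y'‖^2 ≤ 4 * ((φ F h y + φ F h y')/2 - m F h) := by
    intro F h y y'
    have hmid : ∀ i : X, g i ((1/2 : ℝ) • (y + y'))
        = (g i y + g i y')/2 - ‖y - y'‖^2/4 := by
      intro i
      have h1 : (1/2 : ℝ) • (y + y') - f i = (1/2 : ℝ) • ((y - f i) + (y' - f i)) := by
        module
      have h2 : ‖(1/2 : ℝ) • ((y - f i) + (y' - f i))‖^2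
          = (1/4) * ‖(y - f i) + (y' - f i)‖^2 := by
        rw [norm_smul, Real.norm_eq_abs, mul_pow]
        norm_num
      have h3 := norm_add_sq_real (y - f i) (y' - f i)
      have h4 := norm_sub_sq_real (y - f i) (y' - f i)
      have h5 : (y - f i) - (y' - f i) = y - y' := by abel
      rw [h5] at h4
      simp only [hgdef]
      rw [h1, h2]
      linarith
    have hsup : φ F h ((1/2 : ℝ) • (y + y')) ≤ (φ F h y + φ F h y')/2 - ‖y - y'‖^2/4 := by
      refine hφ_le F h _ _ fun i hi => ?_
      rw [hmid i]
      have hy1 : g i y ≤ φ F h y := hg_le_φ F h y i hi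
      have hy2 : g i y' ≤ φ F h y' := hg_le_φ F h y' i hi
      linarith
    have := hm_le F h ((1/2 : ℝ) • (y + y'))
    linarith
  -- the sup of the finite infima
  obtain ⟨A, hA⟩ : ∃ A : Set ℝ,
      A = {r | ∃ (F : Finset X) (h : F.Nonempty), ↑F ⊆ S ∧ r = m F h} := ⟨_, rfl⟩
  have hAne : A.Nonempty := by
    obtain ⟨s₀, hs₀⟩ := hSne
    exact ⟨m {s₀} (Finset.singleton_nonempty s₀), by
      rw [hA]
      exact ⟨{s₀}, Finset.singleton_nonempty s₀, by simpa using hs₀, rfl⟩⟩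
  have hAbdd : BddAbove A := by
    refine ⟨0, ?_⟩
    intro r hr
    rw [hA] at hr
    obtain ⟨F, h, hFS, rfl⟩ := hr
    exact hm0 F h hFS
  obtain ⟨L, hL⟩ : ∃ L : ℝ, L = sSup A := ⟨_, rfl⟩
  have hL0 : L ≤ 0 := by
    rw [hL]
    refine csSup_le hAne ?_
    intro r hr
    rw [hA] at hr
    obtain ⟨F, h, hFS, rfl⟩ := hr
    exact hm0 F h hFS
  have hle_L : ∀ F h, ↑F ⊆ S → m F h ≤ L := by
    intro F h hFS
    rw [hL]
    exact le_csSup hAbdd (by rw [hA]; exact ⟨F, h, hFS, rfl⟩)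
  have hGex : ∀ n : ℕ, ∃ (F : Finset X) (h : F.Nonempty),
      ↑F ⊆ S ∧ L - 1/(n+1 : ℝ) < m F h := by
    intro n
    have hpos : (0:ℝ) < 1/(n+1 : ℝ) := by positivity
    obtain ⟨r, hrA, hr⟩ := exists_lt_of_lt_csSup hAne
      (show L - 1/(n+1 : ℝ) < sSup A by rw [← hL]; linarith)
    rw [hA] at hrA
    obtain ⟨F, h, hFS, rfl⟩ := hrA
    exact ⟨F, h, hFS, hr⟩
  choose G hGne hGS hGm using hGex
  obtain ⟨FF, hFF⟩ : ∃ FF : ℕ → Finset X,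
      FF = fun n => (Finset.range (n+1)).biUnion G := ⟨_, rfl⟩
  have hGFF : ∀ n, G n ⊆ FF n := by
    intro n
    rw [hFF]
    exact Finset.subset_biUnion_of_mem G (Finset.self_mem_range_succ n)
  have hFFne : ∀ n, (FF n).Nonempty := fun n => (hGne n).mono (hGFF n)
  have hFFS : ∀ n, ↑(FF n) ⊆ S := by
    intro n a ha
    rw [hFF] at ha
    simp only [Finset.coe_biUnion, Set.mem_iUnion] at ha
    obtain ⟨k, hk, hak⟩ := ha
    exact hGS k hak
  have hFFmono : ∀ n k, n ≤ k → FF n ⊆ FF k := by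
    intro n k hnk
    rw [hFF]
    exact Finset.biUnion_subset_biUnion_of_subset_left G
      (Finset.range_subset_range.2 (by omega))
  have hmFF : ∀ n : ℕ, L - 1/(n+1 : ℝ) < m (FF n) (hFFne n) :=
    fun n => lt_of_lt_of_le (hGm n) (hmono _ _ _ _ (hGFF n))
  -- approximate minimizers
  have hyex : ∀ n : ℕ, ∃ y : Y, φ (FF n) (hFFne n) y < m (FF n) (hFFne n) + 1/(n+1 : ℝ) := by
    intro n
    have hpos : (0:ℝ) < 1/(n+1 : ℝ) := by positivity
    have hlt : (⨅ z : Y, φ (FF n) (hFFne n) z) < m (FF n) (hFFne n) + 1/(n+1 : ℝ) := by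
      rw [← hm_eq]
      linarith
    exact exists_lt_of_ciInf_lt hlt
  choose yy hyy using hyex
  have hyL : ∀ n : ℕ, φ (FF n) (hFFne n) (yy n) < L + 1/(n+1 : ℝ) :=
    fun n => lt_of_lt_of_le (hyy n) (by linarith [hle_L (FF n) (hFFne n) (hFFS n)])
  have hinv_mono : ∀ n k : ℕ, n ≤ k → 1/(k+1 : ℝ) ≤ 1/(n+1 : ℝ) := by
    intro n k hnk
    apply one_div_le_one_div_of_le (by positivity)
    have : (n:ℝ) ≤ k := Nat.cast_le.2 hnk
    linarith
  have hCau : ∀ n k : ℕ, n ≤ k → ‖yy n - yy k‖^2 ≤ 8/(n+1 : ℝ) := by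
    intro n k hnk
    have h1 : φ (FF n) (hFFne n) (yy k) ≤ φ (FF k) (hFFne k) (yy k) :=
      hφmono _ _ _ _ _ (hFFmono n k hnk)
    have h2 : φ (FF k) (hFFne k) (yy k) < L + 1/(k+1 : ℝ) := hyL k
    have h3 := hyL n
    have h4 := hmFF n
    have h5 := hpara (FF n) (hFFne n) (yy n) (yy k)
    have h6 := hinv_mono n k hnk
    calc ‖yy n - yy k‖^2
        ≤ 4 * ((φ (FF n) (hFFne n) (yy n) + φ (FF n) (hFFne n) (yy k))/2
            - m (FF n) (hFFne n)) := h5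
      _ ≤ 8/(n+1 : ℝ) := by
          have h7 : (8:ℝ)/(n+1) = 4 * (2 * (1/(n+1 : ℝ))) := by ring
          rw [h7]
          have h8 : φ (FF n) (hFFne n) (yy k) < L + 1/(n+1:ℝ) := by linarith
          linarith
  have hbn : Filter.Tendsto (fun n : ℕ => Real.sqrt (8/(n+1 : ℝ))) Filter.atTop (nhds 0) := by
    have h8 : Filter.Tendsto (fun n : ℕ => 8/(n+1 : ℝ)) Filter.atTop (nhds 0) := by
      have := tendsto_one_div_add_atTop_nhds_zero_nat.const_mul (8:ℝ)
      simpa [div_eq_mul_inv, mul_comm] using this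
    have := (Real.continuous_sqrt.tendsto 0).comp h8
    rw [Real.sqrt_zero] at this
    exact this
  have hcauchy : CauchySeq yy := by
    apply cauchySeq_of_le_tendsto_0 (fun n : ℕ => Real.sqrt (8/(n+1 : ℝ))) _ hbn
    intro a b N hNa hNb
    have key : ∀ p q : ℕ, p ≤ q → N ≤ p → dist (yy p) (yy q) ≤ Real.sqrt (8/(N+1 : ℝ)) := by
      intro p q hpq hNp
      rw [dist_eq_norm]
      rw [Real.le_sqrt (norm_nonneg _) (by positivity)]
      refine le_trans (hCau p q hpq) ?_
      have := hinv_mono N p hNp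
      have h8 : (8:ℝ)/(p+1) = 8 * (1/(p+1:ℝ)) := by ring
      have h8' : (8:ℝ)/(N+1) = 8 * (1/(N+1:ℝ)) := by ring
      rw [h8, h8']
      linarith
    rcases le_total a b with hab | hab
    · exact key a b hab hNa
    · rw [dist_comm]; exact key b a hab hNb
  obtain ⟨ystar, hystar⟩ := cauchySeq_tendsto_of_complete hcauchy
  refine ⟨ystar, fun s hs => ?_⟩
  -- add the point `s` to each `FF n`
  have hFF'ne : ∀ n, (insert s (FF n)).Nonempty := fun n => Finset.insert_nonempty _ _
  have hFF'S : ∀ n, ↑(insert s (FF n)) ⊆ S := by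
    intro n a ha
    rw [Finset.coe_insert] at ha
    rcases ha with rfl | ha
    · exact hs
    · exact hFFS n ha
  have hzex : ∀ n : ℕ, ∃ z : Y,
      φ (insert s (FF n)) (hFF'ne n) z < m (insert s (FF n)) (hFF'ne n) + 1/(n+1 : ℝ) := by
    intro n
    have hpos : (0:ℝ) < 1/(n+1 : ℝ) := by positivity
    have hlt : (⨅ z : Y, φ (insert s (FF n)) (hFF'ne n) z)
        < m (insert s (FF n)) (hFF'ne n) + 1/(n+1 : ℝ) := by
      rw [← hm_eq]
      linarith
    exact exists_lt_of_ciInf_lt hlt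
  choose zz hzz using hzex
  have hzzL : ∀ n : ℕ, φ (insert s (FF n)) (hFF'ne n) (zz n) < L + 1/(n+1 : ℝ) := by
    intro n
    have := hle_L _ (hFF'ne n) (hFF'S n)
    have := hzz n
    linarith
  have hgzz : ∀ n : ℕ, g s (zz n) ≤ 1/(n+1 : ℝ) := by
    intro n
    have h1 : g s (zz n) ≤ φ (insert s (FF n)) (hFF'ne n) (zz n) :=
      hg_le_φ _ _ _ s (Finset.mem_insert_self s (FF n))
    linarith [hzzL n, hL0]
  have hzy : ∀ n : ℕ, ‖zz n - yy n‖^2 ≤ 8/(n+1 : ℝ) := by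
    intro n
    have h1 : φ (FF n) (hFFne n) (zz n) ≤ φ (insert s (FF n)) (hFF'ne n) (zz n) :=
      hφmono _ _ _ _ _ (Finset.subset_insert s (FF n))
    have h3 := hyL n
    have h4 := hmFF n
    have h5 := hpara (FF n) (hFFne n) (zz n) (yy n)
    have h6 : φ (FF n) (hFFne n) (zz n) < L + 1/(n+1:ℝ) := by linarith [hzzL n]
    calc ‖zz n - yy n‖^2
        ≤ 4 * ((φ (FF n) (hFFne n) (zz n) + φ (FF n) (hFFne n) (yy n))/2
            - m (FF n) (hFFne n)) := h5
      _ ≤ 8/(n+1 : ℝ) := by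
          have h7 : (8:ℝ)/(n+1) = 4 * (2 * (1/(n+1 : ℝ))) := by ring
          rw [h7]
          linarith
  have hzzt : Filter.Tendsto zz Filter.atTop (nhds ystar) := by
    apply hystar.congr_dist
    apply squeeze_zero (fun n => dist_nonneg)
      (g := fun n : ℕ => Real.sqrt (8/(n+1 : ℝ))) _ hbn
    intro n
    rw [dist_comm, dist_eq_norm, Real.le_sqrt (norm_nonneg _) (by positivity)]
    exact hzy n
  have hgy : g s ystar ≤ 0 := by
    have h1 : Filter.Tendsto (fun n => g s (zz n)) Filter.atTop (nhds (g s ystar)) :=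
      ((hgc s).tendsto ystar).comp hzzt
    have h2 : Filter.Tendsto (fun n : ℕ => 1/(n+1 : ℝ)) Filter.atTop (nhds 0) :=
      tendsto_one_div_add_atTop_nhds_zero_nat
    exact le_of_tendsto_of_tendsto' h1 h2 hgzz
  -- convert squares to norms
  have h7 : ‖ystar - f s‖^2 ≤ (K * ‖x - s‖)^2 := by
    simp only [hgdef] at hgy
    nlinarith [hgy]
  have := Real.sqrt_le_sqrt h7
  rwa [Real.sqrt_sq (norm_nonneg _), Real.sqrt_sq (mul_nonneg hK (norm_nonneg _))] at this
/-- Kirszbraun-Valentine: extension of a Lipschitz map from `S` to `S ∪ X₁`. -/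
lemma kirszbraun_extension {X Y : Type*}
    [NormedAddCommGroup X] [InnerProductSpace ℝ X]
    [NormedAddCommGroup Y] [InnerProductSpace ℝ Y] [CompleteSpace Y]
    (K : ℝ) (hK : 0 ≤ K) (S : Set X) (hSne : S.Nonempty) (f : X → Y)
    (hpair : ∀ a ∈ S, ∀ b ∈ S, ‖f a - f b‖ ≤ K * ‖a - b‖) (X₁ : Set X) :
    ∃ v : X → Y, (∀ s ∈ S, v s = f s) ∧
      ∀ a ∈ S ∪ X₁, ∀ b ∈ S ∪ X₁, ‖v a - v b‖ ≤ K * ‖a - b‖ := by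
  classical
  set G₀ : Set (X × Y) := (fun s => (s, f s)) '' S with hG₀def
  set 𝒮 : Set (Set (X × Y)) := {T | G₀ ⊆ T ∧ (∀ p ∈ T, p.1 ∈ S ∪ X₁) ∧
      ∀ p ∈ T, ∀ q ∈ T, ‖p.2 - q.2‖ ≤ K * ‖p.1 - q.1‖} with h𝒮def
  have hG₀mem : G₀ ∈ 𝒮 := by
    refine ⟨subset_rfl, ?_, ?_⟩
    · rintro p ⟨s, hs, rfl⟩
      exact Or.inl hs
    · rintro p ⟨s, hs, rfl⟩ q ⟨t, ht, rfl⟩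
      exact hpair s hs t ht
  obtain ⟨T, hG₀T, hTmax⟩ := zorn_subset_nonempty 𝒮 (by
    intro c hc𝒮 hchain hcne
    refine ⟨⋃₀ c, ⟨?_, ?_, ?_⟩, fun t ht => Set.subset_sUnion_of_mem ht⟩
    · obtain ⟨t₀, ht₀⟩ := hcne
      exact subset_trans (hc𝒮 ht₀).1 (Set.subset_sUnion_of_mem ht₀)
    · rintro p ⟨t, htc, hpt⟩
      exact (hc𝒮 htc).2.1 p hpt
    · rintro p ⟨t₁, ht₁c, hpt₁⟩ q ⟨t₂, ht₂c, hqt₂⟩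
      rcases hchain.total ht₁c ht₂c with hsub | hsub
      · exact (hc𝒮 ht₂c).2.2 p (hsub hpt₁) q hqt₂
      · exact (hc𝒮 ht₁c).2.2 p hpt₁ q (hsub hqt₂)) G₀ hG₀mem
  obtain ⟨hTG₀, hTdom, hTpair⟩ := hTmax.1
  -- values are unique
  have huniq : ∀ a : X, ∀ y y' : Y, (a, y) ∈ T → (a, y') ∈ T → y = y' := by
    intro a y y' hy hy'
    have := hTpair (a, y) hy (a, y') hy'
    simp only [sub_self, norm_zero, mul_zero] at this
    rw [← sub_eq_zero]
    exact norm_le_zero_iff.1 (by simpa using this)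
  -- the domain of T is all of S ∪ X₁
  have hdom : ∀ x ∈ S ∪ X₁, ∃ y, (x, y) ∈ T := by
    intro x hx
    by_contra hno
    push_neg at hno
    set ff : X → Y := fun a => if h : ∃ y, (a, y) ∈ T then h.choose else 0 with hffdef
    have hffT : ∀ a : X, (∃ y, (a, y) ∈ T) → (a, ff a) ∈ T := by
      intro a h
      simp only [hffdef, dif_pos h]
      exact h.choose_spec
    have hTne : (Prod.fst '' T).Nonempty := by
      obtain ⟨s₀, hs₀⟩ := hSne
      exact ⟨s₀, (s₀, f s₀), hTG₀ ⟨s₀, hs₀, rfl⟩, rfl⟩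
    have hpair' : ∀ a ∈ Prod.fst '' T, ∀ b ∈ Prod.fst '' T, ‖ff a - ff b‖ ≤ K * ‖a - b‖ := by
      rintro a ⟨p, hpT, rfl⟩ b ⟨q, hqT, rfl⟩
      have ha := hffT p.1 ⟨p.2, by rwa [Prod.mk.eta]⟩
      have hb := hffT q.1 ⟨q.2, by rwa [Prod.mk.eta]⟩
      exact hTpair _ ha _ hb
    obtain ⟨z, hz⟩ := kirszbraun_point K hK (Prod.fst '' T) hTne ff hpair' x
    have hT' : insert (x, z) T ∈ 𝒮 := by
      refine ⟨subset_trans hTG₀ (Set.subset_insert _ _), ?_, ?_⟩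
      · rintro p (rfl | hpT)
        · exact hx
        · exact hTdom p hpT
      · have hzq : ∀ q ∈ T, ‖z - q.2‖ ≤ K * ‖x - q.1‖ := by
          intro q hqT
          have h1 := hz q.1 ⟨q, hqT, rfl⟩
          have h2 : ff q.1 = q.2 :=
            huniq q.1 _ _ (hffT q.1 ⟨q.2, by rwa [Prod.mk.eta]⟩) (by rwa [Prod.mk.eta])
          rwa [h2] at h1
        rintro p (rfl | hpT) q (rfl | hqT)
        · simp [mul_nonneg hK (norm_nonneg _)]
        · exact hzq q hqT
        · show ‖p.2 - z‖ ≤ K * ‖p.1 - x‖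
          rw [norm_sub_rev p.2 z, norm_sub_rev p.1 x]
          exact hzq p hpT
        · exact hTpair p hpT q hqT
    have hsub : T ⊆ insert (x, z) T := Set.subset_insert _ _
    have : insert (x, z) T ⊆ T := hTmax.2 hT' hsub
    exact hno z (this (Set.mem_insert _ _))
  -- define the extension
  set v : X → Y := fun a => if h : ∃ y, (a, y) ∈ T then h.choose else f a with hvdef
  have hvT : ∀ a : X, (∃ y, (a, y) ∈ T) → (a, v a) ∈ T := by
    intro a h
    simp only [hvdef, dif_pos h]
    exact h.choose_spec
  refine ⟨v, ?_, ?_⟩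
  · intro s hs
    have h1 : (s, f s) ∈ T := hTG₀ ⟨s, hs, rfl⟩
    exact huniq s _ _ (hvT s ⟨f s, h1⟩) h1
  · intro a ha b hb
    have h1 := hvT a (hdom a ha)
    have h2 := hvT b (hdom b hb)
    exact hTpair _ h1 _ h2

/-- Proposition 3.4: a uniformly continuous map from a convex subset of a
Hilbert space to a Hilbert space can be uniformly approximated by Lipschitz maps. -/
theorem lipschitz_approximation_of_uniformly_continuous {X Y : Type*}
    [NormedAddCommGroup X] [InnerProductSpace ℝ X] [CompleteSpace X]
    [NormedAddCommGroup Y] [InnerProductSpace ℝ Y] [CompleteSpace Y]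
    (X₁ : Set X) (hX₁ : Convex ℝ X₁)
    (w : X → Y) (hw : UniformContinuousOn w X₁) :
    ∀ ε > 0, ∃ (K : NNReal) (v : X → Y), LipschitzOnWith K v X₁ ∧
      ∀ x ∈ X₁, ‖v x - w x‖ < ε := by
  intro ε hε
  rcases Set.eq_empty_or_nonempty X₁ with hX₁e | hX₁ne
  · subst hX₁e
    exact ⟨1, w, by simp [LipschitzOnWith], by simp⟩
  set ε' : ℝ := ε/4 with hε'def
  have hε' : 0 < ε' := by positivity
  obtain ⟨δ₀, hδ₀, hUC₀⟩ := Metric.uniformContinuousOn_iff.1 hw ε' hε'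
  set δ : ℝ := δ₀/2 with hδdef
  have hδ : 0 < δ := by positivity
  have hUC : ∀ a ∈ X₁, ∀ b ∈ X₁, ‖a - b‖ ≤ δ → ‖w a - w b‖ ≤ ε' := by
    intro a ha b hb hab
    have := hUC₀ a ha b hb (by rw [dist_eq_norm]; linarith)
    rw [dist_eq_norm] at this
    linarith
  -- chain lemma on the convex set
  have hchain : ∀ n : ℕ, ∀ a ∈ X₁, ∀ b ∈ X₁, ‖a - b‖ ≤ (n+1) * δ →
      ‖w a - w b‖ ≤ (n+1) * ε' := by
    intro n
    induction n with
    | zero => intro a ha b hb hab; simpa using hUC a ha b hb (by simpa using hab)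
    | succ n ih =>
        intro a ha b hb hab
        push_cast at hab ⊢
        have hpos : (0:ℝ) < (n:ℝ) + 2 := by positivity
        set c : X := a + ((1:ℝ)/(n+2)) • (b - a) with hcdef
        have hc : c ∈ X₁ := by
          have hcomb : c = (1 - (1:ℝ)/(n+2)) • a + ((1:ℝ)/(n+2)) • b := by
            rw [hcdef]; module
          rw [hcomb]
          refine hX₁ ha hb ?_ ?_ (by ring)
          · have : (1:ℝ)/(n+2) ≤ 1 := by
              rw [div_le_one hpos]; linarith
            linarith
          · positivity
        have hac : ‖a - c‖ ≤ δ := by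
          have h1 : a - c = ((1:ℝ)/(n+2)) • (a - b) := by rw [hcdef]; module
          rw [h1, norm_smul, Real.norm_eq_abs, abs_of_pos (by positivity)]
          rw [div_mul_eq_mul_div, one_mul, div_le_iff₀ hpos]
          have : ((n:ℝ)+1+1) = (n:ℝ)+2 := by ring
          rw [this] at hab
          calc ‖a - b‖ ≤ ((n:ℝ)+2) * δ := hab
            _ = δ * ((n:ℝ)+2) := by ring
        have hcb : ‖c - b‖ ≤ ((n:ℝ)+1) * δ := by
          have h1 : c - b = (((n:ℝ)+1)/(n+2)) • (a - b) := by
            rw [hcdef]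
            have h2 : ((n:ℝ)+1)/(n+2) = 1 - 1/(n+2) := by field_simp; ring
            rw [h2]; module
          rw [h1, norm_smul, Real.norm_eq_abs, abs_of_pos (by positivity)]
          rw [div_mul_eq_mul_div, div_le_iff₀ hpos]
          have : ((n:ℝ)+1+1) = (n:ℝ)+2 := by ring
          rw [this] at hab
          calc ((n:ℝ)+1) * ‖a - b‖ ≤ ((n:ℝ)+1) * (((n:ℝ)+2) * δ) := by
                have : (0:ℝ) ≤ (n:ℝ)+1 := by positivity
                exact mul_le_mul_of_nonneg_left hab this
            _ = ((n:ℝ)+1) * δ * ((n:ℝ)+2) := by ring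
        have h3 := hUC a ha c hc hac
        have h4 := ih c hc b hb hcb
        calc ‖w a - w b‖ ≤ ‖w a - w c‖ + ‖w c - w b‖ := by
              have : w a - w b = (w a - w c) + (w c - w b) := by abel
              rw [this]; exact norm_add_le _ _
          _ ≤ ε' + ((n:ℝ)+1) * ε' := add_le_add h3 h4
          _ = ((n:ℝ)+1+1) * ε' := by ring
  -- maximal δ-separated subset of X₁
  obtain ⟨Snet, hSmax⟩ := zorn_subset
    {S : Set X | S ⊆ X₁ ∧ ∀ a ∈ S, ∀ b ∈ S, a ≠ b → δ ≤ ‖a - b‖} (by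
      intro c hc𝒮 hchain'
      refine ⟨⋃₀ c, ⟨?_, ?_⟩, fun t ht => Set.subset_sUnion_of_mem ht⟩
      · rintro a ⟨t, htc, hat⟩
        exact (hc𝒮 htc).1 hat
      · rintro a ⟨t₁, ht₁c, hat₁⟩ b ⟨t₂, ht₂c, hbt₂⟩ hab
        rcases hchain'.total ht₁c ht₂c with hsub | hsub
        · exact (hc𝒮 ht₂c).2 a (hsub hat₁) b hbt₂ hab
        · exact (hc𝒮 ht₁c).2 a hat₁ b (hsub hbt₂) hab)
  obtain ⟨hSX₁, hSsep⟩ := hSmax.1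
  have hnear : ∀ a ∈ X₁, ∃ s ∈ Snet, ‖a - s‖ < δ := by
    intro a ha
    by_contra hno
    push_neg at hno
    have haS : a ∉ Snet := by
      intro haS
      have := hno a haS
      simp only [sub_self, norm_zero] at this
      linarith
    have hins : insert a Snet ∈
        {S : Set X | S ⊆ X₁ ∧ ∀ a ∈ S, ∀ b ∈ S, a ≠ b → δ ≤ ‖a - b‖} := by
      refine ⟨Set.insert_subset ha hSX₁, ?_⟩
      rintro x (rfl | hx) y (rfl | hy) hxy
      · exact absurd rfl hxy
      · exact hno y hy
      · rw [norm_sub_rev]; exact hno x hx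
      · exact hSsep x hx y hy hxy
    have := hSmax.2 hins (Set.subset_insert a Snet)
    exact haS (this (Set.mem_insert a Snet))
  have hSne : Snet.Nonempty := by
    obtain ⟨a, ha⟩ := hX₁ne
    obtain ⟨s, hs, _⟩ := hnear a ha
    exact ⟨s, hs⟩
  -- w is Lipschitz on the net with constant 2ε'/δ
  set Klip : ℝ := 2*ε'/δ with hKlipdef
  have hKlip0 : 0 ≤ Klip := by positivity
  have hpairnet : ∀ a ∈ Snet, ∀ b ∈ Snet, ‖w a - w b‖ ≤ Klip * ‖a - b‖ := by
    intro a ha b hb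
    rcases eq_or_ne a b with rfl | hab
    · simp
    · have hδab : δ ≤ ‖a - b‖ := hSsep a ha b hb hab
      set r : ℝ := ‖a - b‖/δ with hrdef
      have hr1 : 1 ≤ r := by rw [hrdef, le_div_iff₀ hδ]; linarith
      have hr0 : 0 ≤ r := by linarith
      set n : ℕ := ⌊r⌋₊ with hndef
      have hub : ‖a - b‖ ≤ ((n:ℝ)+1) * δ := by
        have := Nat.lt_floor_add_one r
        have h2 : r * δ = ‖a - b‖ := by rw [hrdef]; field_simp
        nlinarith
      have hwab := hchain n a (hSX₁ ha) b (hSX₁ hb) hub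
      have hn_le : (n:ℝ) ≤ r := Nat.floor_le hr0
      have h3 : ((n:ℝ)+1) * ε' ≤ 2*r*ε' := by nlinarith
      have h4 : 2*r*ε' = Klip * ‖a - b‖ := by
        rw [hKlipdef, hrdef]; field_simp
      linarith
  -- extend from the net
  obtain ⟨v, hveq, hvlip⟩ := kirszbraun_extension Klip hKlip0 Snet hSne w hpairnet X₁
  refine ⟨Real.toNNReal Klip, v, ?_, ?_⟩
  · rw [lipschitzOnWith_iff_dist_le_mul]
    intro a ha b hb
    rw [dist_eq_norm, dist_eq_norm, Real.coe_toNNReal Klip hKlip0]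
    exact hvlip a (Or.inr ha) b (Or.inr hb)
  · intro a ha
    obtain ⟨s, hs, hsnear⟩ := hnear a ha
    have h1 : ‖v a - v s‖ ≤ Klip * ‖a - s‖ := hvlip a (Or.inr ha) s (Or.inl hs)
    have h2 : v s = w s := hveq s hs
    have h3 : ‖w s - w a‖ ≤ ε' := by
      refine hUC s (hSX₁ hs) a ha ?_
      rw [norm_sub_rev]
      linarith
    have h4 : Klip * ‖a - s‖ ≤ Klip * δ := mul_le_mul_of_nonneg_left hsnear.le hKlip0
    have h5 : Klip * δ = 2*ε' := by rw [hKlipdef]; field_simp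
    calc ‖v a - w a‖ ≤ ‖v a - v s‖ + ‖v s - w a‖ := by
          have : v a - w a = (v a - v s) + (v s - w a) := by abel
          rw [this]; exact norm_add_le _ _
      _ = ‖v a - v s‖ + ‖w s - w a‖ := by rw [h2]
      _ ≤ Klip * ‖a - s‖ + ε' := add_le_add h1 h3
      _ ≤ 2*ε' + ε' := by linarith
      _ < ε := by rw [hε'def]; linarith
end

section
/- In the setting of Example 1.1 (A, B, C = A + B in ℝ³ as defined there), for each point c = (cos t, sin t, 1 − 2t/π) with t ∈ (0, π/2], the pair a = (cos t, sin t, 0) ∈ A, b = (0, 0, 1 − 2t/π) ∈ B is the unique pair with a ∈ A, b ∈ B and a + b = c. -/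
open Set Pointwise Real

lemma exposed_unique {E : Type*} [AddCommGroup E] [Module ℝ E] (f : E → ℝ)
    (hadd : ∀ x y, f (x + y) = f x + f y) (hsmul : ∀ (c : ℝ) x, f (c • x) = c * f x)
    (S : Set E) (a : E)
    (hS : ∀ x ∈ S, f x ≤ 1) (hSa : ∀ x ∈ S, f x = 1 → x = a) :
    ∀ p ∈ convexHull ℝ S, f p = 1 → p = a := by
  have hconv : Convex ℝ {x | f x ≤ 1 ∧ (f x = 1 → x = a)} := by
    rintro x ⟨hx1, hx2⟩ y ⟨hy1, hy2⟩ u v hu hv huv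
    have hf : f (u • x + v • y) = u * f x + v * f y := by rw [hadd, hsmul, hsmul]
    have h1 : u * f x ≤ u := by nlinarith
    have h2 : v * f y ≤ v := by nlinarith
    refine ⟨by rw [hf]; linarith, ?_⟩
    intro heq
    rw [hf] at heq
    have e1 : u * (1 - f x) = 0 := by nlinarith
    have e2 : v * (1 - f y) = 0 := by nlinarith
    rcases mul_eq_zero.mp e1 with hu0 | hfx
    · have hv1 : v = 1 := by linarith
      have hfy : f y = 1 := by
        rcases mul_eq_zero.mp e2 with h | h
        · exfalso; rw [h] at hv1; norm_num at hv1
        · linarith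
      rw [hu0, hv1, zero_smul, one_smul, zero_add]
      exact hy2 hfy
    · have hx' : x = a := hx2 (by linarith)
      rcases mul_eq_zero.mp e2 with hv0 | hfy
      · have hu1 : u = 1 := by linarith
        rw [hv0, hu1, zero_smul, one_smul, add_zero]
        exact hx'
      · have hy' : y = a := hy2 (by linarith)
        rw [hx', hy', ← add_smul, huv, one_smul]
  intro p hp hfp
  have hsub : S ⊆ {x | f x ≤ 1 ∧ (f x = 1 → x = a)} := fun x hx => ⟨hS x hx, hSa x hx⟩
  exact (convexHull_min hsub hconv hp).2 hfp

/-- in Example 1.1, for `c = (cos t, sin t, 1 − 2t/π)` with `t ∈ (0, π/2]`,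
the pair `a = (cos t, sin t, 0) ∈ A`, `b = (0,0,1−2t/π) ∈ B` is the unique pair with
`a ∈ A`, `b ∈ B`, `a + b = c`. -/
theorem unique_decomposition_on_curve :
    let D₀ : Set (ℝ × ℝ × ℝ) := {p | ∃ s ∈ Icc (0 : ℝ) π, p = (cos s, sin s, 0)}
    let A₀ : Set (ℝ × ℝ × ℝ) := convexHull ℝ (D₀ ∪ {(1, 0, 1), (-1, 0, 1)})
    let D₁ : Set (ℝ × ℝ × ℝ) := {p | ∃ s ∈ Icc (-π) (0 : ℝ), p = (cos s, sin s, 1)}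
    let A₁ : Set (ℝ × ℝ × ℝ) := convexHull ℝ (D₁ ∪ {(1, 0, 0), (-1, 0, 0)})
    let A : Set (ℝ × ℝ × ℝ) := A₀ ∪ A₁
    let B : Set (ℝ × ℝ × ℝ) := convexHull ℝ {(0, 0, 0), (0, 0, 1)}
    ∀ t : ℝ, t ∈ Ioc 0 (π / 2) →
      ((cos t, sin t, (0 : ℝ)) ∈ A ∧ ((0 : ℝ), (0 : ℝ), 1 - 2 * t / π) ∈ B ∧
        (cos t, sin t, (0 : ℝ)) + ((0 : ℝ), (0 : ℝ), 1 - 2 * t / π)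
          = (cos t, sin t, 1 - 2 * t / π)) ∧
      ∀ a b : ℝ × ℝ × ℝ, a ∈ A → b ∈ B →
        a + b = (cos t, sin t, 1 - 2 * t / π) →
        a = (cos t, sin t, (0 : ℝ)) ∧ b = ((0 : ℝ), (0 : ℝ), 1 - 2 * t / π) := by
  intro D₀ A₀ D₁ A₁ A B t ht
  obtain ⟨ht0, ht2⟩ := ht
  have hπ : (0 : ℝ) < π := Real.pi_pos
  have htπ : t ≤ π := by linarith
  -- the exposing functional
  set f : ℝ × ℝ × ℝ → ℝ := fun p => cos t * p.1 + sin t * p.2.1 with hfdef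
  have hadd : ∀ x y : ℝ × ℝ × ℝ, f (x + y) = f x + f y := by
    intro x y; simp [hfdef]; ring
  have hsmul : ∀ (c : ℝ) (x : ℝ × ℝ × ℝ), f (c • x) = c * f x := by
    intro c x; simp [hfdef, smul_eq_mul]; ring
  have hcost_lt : cos t < 1 := by
    by_contra h
    have h1 : cos t = 1 := le_antisymm (cos_le_one t) (not_lt.mp h)
    have := (cos_eq_one_iff_of_lt_of_lt (by linarith) (by linarith)).mp h1
    linarith
  have hcost_nonneg : 0 ≤ cos t :=
    cos_nonneg_of_mem_Icc ⟨by linarith, ht2⟩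
  have key : ∀ s ∈ Icc (0:ℝ) π, f (cos s, sin s, (0:ℝ)) ≤ 1 ∧
      (f (cos s, sin s, (0:ℝ)) = 1 → s = t) := by
    intro s hs
    have hfs : f (cos s, sin s, (0:ℝ)) = cos (t - s) := by
      simp [hfdef, cos_sub]; try ring
    rw [hfs]
    refine ⟨cos_le_one _, fun h => ?_⟩
    have := (cos_eq_one_iff_of_lt_of_lt (x := t - s)
      (by cases hs with | intro h1 h2 => linarith) (by cases hs with | intro h1 h2 => linarith)).mp h
    linarith
  have key₁ : ∀ s ∈ Icc (-π) (0:ℝ), f (cos s, sin s, (1:ℝ)) ≤ 1 ∧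
      f (cos s, sin s, (1:ℝ)) ≠ 1 := by
    intro s hs
    have hfs : f (cos s, sin s, (1:ℝ)) = cos (t - s) := by
      simp [hfdef, cos_sub]; try ring
    rw [hfs]
    refine ⟨cos_le_one _, fun h => ?_⟩
    have := (cos_eq_one_iff_of_lt_of_lt (x := t - s)
      (by cases hs with | intro h1 h2 => linarith) (by cases hs with | intro h1 h2 => linarith)).mp h
    cases hs with | intro h1 h2 => linarith
  -- uniqueness within A₀
  have hA₀ : ∀ p ∈ A₀, f p = 1 → p = (cos t, sin t, (0:ℝ)) := by
    apply exposed_unique f hadd hsmul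
    · rintro x (⟨s, hs, rfl⟩ | hx)
      · exact (key s hs).1
      · rcases hx with rfl | rfl
        · have h1 : f ((1:ℝ),(0:ℝ),(1:ℝ)) = cos t := by simp [hfdef]
          rw [h1]; linarith
        · have h1 : f ((-1:ℝ),(0:ℝ),(1:ℝ)) = -cos t := by simp [hfdef]
          rw [h1]; linarith
    · rintro x (⟨s, hs, rfl⟩ | hx) hfx
      · have := (key s hs).2 hfx; subst this; rfl
      · rcases hx with rfl | rfl
        · exfalso
          have h1 : f ((1:ℝ),(0:ℝ),(1:ℝ)) = cos t := by simp [hfdef]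
          rw [h1] at hfx; linarith
        · exfalso
          have h1 : f ((-1:ℝ),(0:ℝ),(1:ℝ)) = -cos t := by simp [hfdef]
          rw [h1] at hfx; linarith
  have hA₁ : ∀ p ∈ A₁, f p = 1 → p = (cos t, sin t, (0:ℝ)) := by
    apply exposed_unique f hadd hsmul
    · rintro x (⟨s, hs, rfl⟩ | hx)
      · exact (key₁ s hs).1
      · rcases hx with rfl | rfl
        · have h1 : f ((1:ℝ),(0:ℝ),(0:ℝ)) = cos t := by simp [hfdef]
          rw [h1]; linarith
        · have h1 : f ((-1:ℝ),(0:ℝ),(0:ℝ)) = -cos t := by simp [hfdef]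
          rw [h1]; linarith
    · rintro x (⟨s, hs, rfl⟩ | hx) hfx
      · exact absurd hfx (key₁ s hs).2
      · rcases hx with rfl | rfl
        · exfalso
          have h1 : f ((1:ℝ),(0:ℝ),(0:ℝ)) = cos t := by simp [hfdef]
          rw [h1] at hfx; linarith
        · exfalso
          have h1 : f ((-1:ℝ),(0:ℝ),(0:ℝ)) = -cos t := by simp [hfdef]
          rw [h1] at hfx; linarith
  have hβ1 : 2 * t / π ≤ 1 := by
    rw [div_le_one hπ]; linarith
  have hβ0 : 0 < 2 * t / π := by positivity
  have hBseg : B = segment ℝ ((0:ℝ),(0:ℝ),(0:ℝ)) ((0:ℝ),(0:ℝ),(1:ℝ)) := convexHull_pair _ _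
  constructor
  · refine ⟨Or.inl (subset_convexHull ℝ _ (Or.inl ⟨t, ⟨ht0.le, htπ⟩, rfl⟩)), ?_, ?_⟩
    · rw [hBseg]
      refine ⟨2 * t / π, 1 - 2 * t / π, hβ0.le, by linarith, by ring, ?_⟩
      simp [Prod.ext_iff]
    · simp [Prod.ext_iff]
  · intro a b ha hb hab
    rw [hBseg] at hb
    obtain ⟨u, v, hu, hv, huv, hbeq⟩ := hb
    have hb' : b = ((0:ℝ), (0:ℝ), v) := by
      rw [← hbeq]; simp [Prod.ext_iff]
    subst hb'
    have hab' : a.1 = cos t ∧ a.2.1 = sin t ∧ a.2.2 + v = 1 - 2 * t / π := by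
      have := hab
      simp [Prod.ext_iff] at this
      exact ⟨this.1, this.2.1, this.2.2⟩
    have hfa : f a = 1 := by
      rw [hfdef]; simp only
      rw [hab'.1, hab'.2.1]
      nlinarith [sin_sq_add_cos_sq t]
    have haeq : a = (cos t, sin t, (0:ℝ)) := by
      rcases ha with h | h
      · exact hA₀ a h hfa
      · exact hA₁ a h hfa
    refine ⟨haeq, ?_⟩
    have hz : a.2.2 = 0 := by rw [haeq]
    have hv' : v = 1 - 2 * t / π := by
      have := hab'.2.2; rw [hz] at this; linarith
    rw [hv']
end
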